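/- arXiv:2206.11469 — 6 statements merged into one kernel-verified Lean document; each statement's English description precedes it below -/
import Mathlib

section
/- Let U be a unitary on A⊗B and σ a density matrix on B. Then U is compatible with σ (i.e., Tr_A[U(ρ⊗σ)U†] = σ for every density matrix ρ on A) if and only if for every finite-dimensional ancilla system R and every density matrix ρ_{RA} on R⊗A whose marginal Tr_R[ρ_{RA}] has full rank, Tr_A[(1_R⊗U)(ρ_{RA}⊗σ)(1_R⊗U)†] = Tr_A[ρ_{RA}] ⊗ σ. -/
open scoped Matrix Kronecker ComplexOrder Classical

noncomputable section

/-- A density matrix: positive semidefinite with unit trace. -/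
def IsDensity {X : Type*} [Fintype X] (ρ : Matrix X X ℂ) : Prop :=
  ρ.PosSemidef ∧ ρ.trace = 1

/-- A pure state: a density matrix that is a rank-one projection. -/
def IsPureState {X : Type*} [Fintype X] (ρ : Matrix X X ℂ) : Prop :=
  IsDensity ρ ∧ ρ * ρ = ρ

/-- A unitary matrix. -/
def IsUnitaryMat {X : Type*} [Fintype X] [DecidableEq X] (U : Matrix X X ℂ) : Prop :=
  U * Uᴴ = 1 ∧ Uᴴ * U = 1

/-- An orthogonal projection. -/
def IsProjection {X : Type*} [Fintype X] (P : Matrix X X ℂ) : Prop :=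
  P.IsHermitian ∧ P * P = P

/-- Partial trace over the first tensor factor. -/
def ptraceL {A B : Type*} [Fintype A] (M : Matrix (A × B) (A × B) ℂ) : Matrix B B ℂ :=
  Matrix.of fun b b' => ∑ a, M (a, b) (a, b')

/-- Partial trace over the second tensor factor. -/
def ptraceR {A B : Type*} [Fintype B] (M : Matrix (A × B) (A × B) ℂ) : Matrix A A ℂ :=
  Matrix.of fun a a' => ∑ b, M (a, b) (a', b)

/-- Partial trace over the middle factor of `(R ⊗ A) ⊗ B`. -/
def ptraceMid {R A B : Type*} [Fintype A] (M : Matrix ((R × A) × B) ((R × A) × B) ℂ) :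
    Matrix (R × B) (R × B) ℂ :=
  Matrix.of fun p q => ∑ a, M ((p.1, a), p.2) ((q.1, a), q.2)

/-- Partial trace over the first factor of `(R ⊗ A) ⊗ B`. -/
def ptraceFst3 {R A B : Type*} [Fintype R] (M : Matrix ((R × A) × B) ((R × A) × B) ℂ) :
    Matrix (A × B) (A × B) ℂ :=
  Matrix.of fun p q => ∑ r, M ((r, p.1), p.2) ((r, q.1), q.2)

/-- `U` on `A ⊗ B` is compatible with `σ` on `B`:
`Tr_A[U (ρ ⊗ σ) U†] = σ` for every density matrix `ρ` on `A`. -/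
def Compatible {A B : Type*} [Fintype A] [Fintype B] [DecidableEq A] [DecidableEq B]
    (U : Matrix (A × B) (A × B) ℂ) (σ : Matrix B B ℂ) : Prop :=
  ∀ ρ : Matrix A A ℂ, IsDensity ρ → ptraceL (U * (ρ ⊗ₖ σ) * Uᴴ) = σ

/-- `1_R ⊗ U` acting on `(R ⊗ A) ⊗ B`. -/
def oneTensor {R A B : Type*} [DecidableEq R] (U : Matrix (A × B) (A × B) ℂ) :
    Matrix ((R × A) × B) ((R × A) × B) ℂ :=
  Matrix.of fun p q => (if p.1.1 = q.1.1 then (1 : ℂ) else 0) * U (p.1.2, p.2) (q.1.2, q.2)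

/-- Partial transpose on the second tensor factor. -/
def ptransposeSnd {A B : Type*} (U : Matrix (A × B) (A × B) ℂ) : Matrix (A × B) (A × B) ℂ :=
  Matrix.of fun p q => U (p.1, q.2) (q.1, p.2)

/-- Eigenvalues of a matrix (junk value `0` when not Hermitian). -/
def eigsOf {X : Type*} [Fintype X] [DecidableEq X] (ρ : Matrix X X ℂ) : X → ℝ :=
  if h : ρ.IsHermitian then h.eigenvalues else 0

/-- Von Neumann entropy (base-2). -/
def vN {X : Type*} [Fintype X] [DecidableEq X] (ρ : Matrix X X ℂ) : ℝ :=
  -∑ i, eigsOf ρ i * Real.logb 2 (eigsOf ρ i)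

/-- Ky Fan partial sum: sum of the `k` largest values of `v` (with multiplicity). -/
def kySum {X : Type*} [Fintype X] (v : X → ℝ) (k : ℕ) : ℝ :=
  ⨆ s : {s : Finset X // s.card ≤ k}, ∑ i ∈ s.1, v i

/-- `v` majorizes `w` (Ky Fan characterization, padding with zeros). -/
def Majorizes {X Y : Type*} [Fintype X] [Fintype Y] (v : X → ℝ) (w : Y → ℝ) : Prop :=
  ∀ k : ℕ, kySum w k ≤ kySum v k

/-- Rényi entropy of order `α ≥ 0` of a probability vector (base 2). -/
def renyi {X : Type*} [Fintype X] (v : X → ℝ) (α : ℝ) : ℝ :=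
  if α = 0 then Real.logb 2 ((Finset.univ.filter (fun i => v i ≠ 0)).card : ℝ)
  else if α = 1 then -∑ i, v i * Real.logb 2 (v i)
  else (1 / (1 - α)) * Real.logb 2 (∑ i, v i ^ α)

/-- A completely positive trace-preserving map, via a Kraus representation. -/
def IsCPTP {X Y : Type*} [Fintype X] [Fintype Y] [DecidableEq X]
    (N : Matrix X X ℂ →ₗ[ℂ] Matrix Y Y ℂ) : Prop :=
  ∃ (m : ℕ) (K : Fin m → Matrix Y X ℂ),
    (∀ M, N M = ∑ j, K j * M * (K j)ᴴ) ∧ (∑ j, (K j)ᴴ * K j = 1)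

/-- `N ⊗ id_B` for a linear map `N` on the first tensor factor. -/
def extendFst {A A' B : Type*} (N : Matrix A A ℂ →ₗ[ℂ] Matrix A' A' ℂ)
    (M : Matrix (A × B) (A × B) ℂ) : Matrix (A' × B) (A' × B) ℂ :=
  Matrix.of fun p q => N (Matrix.of fun a a' => M (a, p.2) (a', q.2)) p.1 q.1

/-- `id_R ⊗ L ⊗ id_B` for a linear map `L` on the middle factor. -/
def extendMid {R A B : Type*} (L : Matrix A A ℂ →ₗ[ℂ] Matrix A A ℂ)
    (M : Matrix ((R × A) × B) ((R × A) × B) ℂ) : Matrix ((R × A) × B) ((R × A) × B) ℂ :=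
  Matrix.of fun p q =>
    L (Matrix.of fun a a' => M ((p.1.1, a), p.2) ((q.1.1, a'), q.2)) p.1.2 q.1.2

/-- `U0 ⊗ U1` acting on `(A0 ⊗ A1) ⊗ (B0 ⊗ B1)`, with `U0` on `A0,B0` and `U1` on `A1,B1`. -/
def delocW {A0 B0 A1 B1 : Type*} (U0 : Matrix (A0 × B0) (A0 × B0) ℂ)
    (U1 : Matrix (A1 × B1) (A1 × B1) ℂ) :
    Matrix ((A0 × A1) × (B0 × B1)) ((A0 × A1) × (B0 × B1)) ℂ :=
  Matrix.of fun p q =>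
    U0 (p.1.1, p.2.1) (q.1.1, q.2.1) * U1 (p.1.2, p.2.2) (q.1.2, q.2.2)

/-- The pair `(U0, U1)` is compatible with `σ` on `B0 ⊗ B1` as a delocalized catalyst. -/
def DelocCompatible {A0 B0 A1 B1 : Type*} [Fintype A0] [Fintype A1] [Fintype B0] [Fintype B1]
    (U0 : Matrix (A0 × B0) (A0 × B0) ℂ) (U1 : Matrix (A1 × B1) (A1 × B1) ℂ)
    (σ : Matrix (B0 × B1) (B0 × B1) ℂ) : Prop :=
  ∀ ρ : Matrix (A0 × A1) (A0 × A1) ℂ, IsDensity ρ →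
    ptraceL (delocW U0 U1 * (ρ ⊗ₖ σ) * (delocW U0 U1)ᴴ) = σ

/-- `ρ` on `A ⊗ B` is partially classical (PC) on the first factor. -/
def PCFirst {A B : Type*} [Fintype A] [Fintype B] [DecidableEq A] [DecidableEq B]
    (ρ : Matrix (A × B) (A × B) ℂ) : Prop :=
  ∃ (n : ℕ) (P : Fin n → Matrix A A ℂ), 2 ≤ n ∧ (∀ i, P i ≠ 0) ∧
    (∀ i, IsProjection (P i)) ∧ (∀ i j, i ≠ j → P i * P j = 0) ∧ (∑ i, P i = 1) ∧
    ρ = ∑ i, (P i ⊗ₖ (1 : Matrix B B ℂ)) * ρ * (P i ⊗ₖ (1 : Matrix B B ℂ))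

/-- `ρ` on `A ⊗ B` is partially classical (PC) on the second factor. -/
def PCSecond {A B : Type*} [Fintype A] [Fintype B] [DecidableEq A] [DecidableEq B]
    (ρ : Matrix (A × B) (A × B) ℂ) : Prop :=
  ∃ (n : ℕ) (P : Fin n → Matrix B B ℂ), 2 ≤ n ∧ (∀ i, P i ≠ 0) ∧
    (∀ i, IsProjection (P i)) ∧ (∀ i j, i ≠ j → P i * P j = 0) ∧ (∑ i, P i = 1) ∧
    ρ = ∑ i, ((1 : Matrix A A ℂ) ⊗ₖ P i) * ρ * ((1 : Matrix A A ℂ) ⊗ₖ P i)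

/-- `U_{A'B} ⊗ 1_A` acting on `A' ⊗ (A ⊗ B)` where `A'` is a copy of `A`. -/
def copyW {A B : Type*} [DecidableEq A] (U : Matrix (A × B) (A × B) ℂ) :
    Matrix (A × (A × B)) (A × (A × B)) ℂ :=
  Matrix.of fun p q =>
    U (p.1, p.2.2) (q.1, q.2.2) * (if p.2.1 = q.2.1 then (1 : ℂ) else 0)

/-- `U` on `A ⊗ B` is compatible with the bipartite state `σ` on `B` up to local unitary. -/
def CompatOnSndUpToLU {A B : Type*} [Fintype A] [Fintype B] [DecidableEq A] [DecidableEq B]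
    (U : Matrix (A × B) (A × B) ℂ) (σ : Matrix (A × B) (A × B) ℂ) : Prop :=
  ∃ V : Matrix B B ℂ, IsUnitaryMat V ∧
    ∀ ρ' : Matrix A A ℂ, IsDensity ρ' →
      ptraceL (copyW U * (ρ' ⊗ₖ σ) * (copyW U)ᴴ)
        = ((1 : Matrix A A ℂ) ⊗ₖ V) * σ * ((1 : Matrix A A ℂ) ⊗ₖ V)ᴴ

/-- The maximally entangled state `φ⁺` on `B ⊗ B`. -/
def maxEnt (B : Type*) [Fintype B] [DecidableEq B] : Matrix (B × B) (B × B) ℂ :=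
  Matrix.of fun p q =>
    (if p.1 = p.2 then (1 : ℂ) else 0) * (if q.1 = q.2 then (1 : ℂ) else 0) /
      (Fintype.card B : ℂ)

/-- Choi matrix of a linear map on `B`. -/
def choi {B : Type*} [Fintype B] [DecidableEq B]
    (R : Matrix B B ℂ →ₗ[ℂ] Matrix B B ℂ) : Matrix (B × B) (B × B) ℂ :=
  extendFst R (maxEnt B)

/-- `U1 ⊗ U0ᵀ` acting on `(A ⊗ A') ⊗ (B ⊗ B')`, `U1` on `A,B`, `U0ᵀ` on `A',B'`. -/
def dynW {A B : Type*} (U0 U1 : Matrix (A × B) (A × B) ℂ) :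
    Matrix ((A × A) × (B × B)) ((A × A) × (B × B)) ℂ :=
  Matrix.of fun p q =>
    U1 (p.1.1, p.2.1) (q.1.1, q.2.1) * U0ᵀ (p.1.2, p.2.2) (q.1.2, q.2.2)

/-- Compatibility of the superunitary `(U0, U1)` with a Choi matrix `J`. -/
def ChoiCompat {A B : Type*} [Fintype A] [Fintype B]
    (U0 U1 : Matrix (A × B) (A × B) ℂ) (J : Matrix (B × B) (B × B) ℂ) : Prop :=
  ∀ ρ : Matrix (A × A) (A × A) ℂ, IsDensity ρ →
    ptraceL (dynW U0 U1 * (ρ ⊗ₖ J) * (dynW U0 U1)ᴴ) = J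

/-- `Pr`, with type sets `I`, `II`, is the essential decomposition of the
first factor `A` for `ρ` on `A ⊗ B`. -/
def EssDecompFst {A B : Type*} [Fintype A] [Fintype B] [DecidableEq A] [DecidableEq B]
    (ρ : Matrix (A × B) (A × B) ℂ) {n : ℕ} (Pr : Fin n → Matrix A A ℂ)
    (I II : Finset (Fin n)) : Prop :=
  (∀ i, IsProjection (Pr i)) ∧ (∀ i j, i ≠ j → Pr i * Pr j = 0) ∧ (∑ i, Pr i = 1) ∧
  (∀ i, Pr i ≠ 0) ∧ Disjoint I II ∧ I ∪ II = Finset.univ ∧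
  (∀ i, Commute (Pr i ⊗ₖ (1 : Matrix B B ℂ)) ρ) ∧
  (∀ i ∈ I, ∀ P : Matrix A A ℂ, IsProjection P → P * Pr i = P → Pr i * P = P →
      Commute (P ⊗ₖ (1 : Matrix B B ℂ))
        ((Pr i ⊗ₖ (1 : Matrix B B ℂ)) * ρ * (Pr i ⊗ₖ (1 : Matrix B B ℂ))) →
      P = 0 ∨ P = Pr i) ∧
  (∀ i ∈ II, ∃ (r : ℕ) (σi : Matrix B B ℂ), 0 < r ∧ (Pr i).trace = (r : ℂ) ∧
      IsDensity σi ∧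
      (Pr i ⊗ₖ (1 : Matrix B B ℂ)) * ρ * (Pr i ⊗ₖ (1 : Matrix B B ℂ))
        = (((Pr i ⊗ₖ (1 : Matrix B B ℂ)) * ρ).trace / (r : ℂ)) • (Pr i ⊗ₖ σi)) ∧
  (∀ P : Matrix A A ℂ, IsProjection P → (∃ i, ¬ Commute P (Pr i)) →
      ¬ Commute (P ⊗ₖ (1 : Matrix B B ℂ)) ρ)

/-- `Pr`, with type sets `I`, `II`, is the essential decomposition of the
second factor `B` for `ρ` on `A ⊗ B`. -/
def EssDecompSnd {A B : Type*} [Fintype A] [Fintype B] [DecidableEq A] [DecidableEq B]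
    (ρ : Matrix (A × B) (A × B) ℂ) {n : ℕ} (Pr : Fin n → Matrix B B ℂ)
    (I II : Finset (Fin n)) : Prop :=
  (∀ i, IsProjection (Pr i)) ∧ (∀ i j, i ≠ j → Pr i * Pr j = 0) ∧ (∑ i, Pr i = 1) ∧
  (∀ i, Pr i ≠ 0) ∧ Disjoint I II ∧ I ∪ II = Finset.univ ∧
  (∀ i, Commute ((1 : Matrix A A ℂ) ⊗ₖ Pr i) ρ) ∧
  (∀ i ∈ I, ∀ P : Matrix B B ℂ, IsProjection P → P * Pr i = P → Pr i * P = P →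
      Commute ((1 : Matrix A A ℂ) ⊗ₖ P)
        (((1 : Matrix A A ℂ) ⊗ₖ Pr i) * ρ * ((1 : Matrix A A ℂ) ⊗ₖ Pr i)) →
      P = 0 ∨ P = Pr i) ∧
  (∀ i ∈ II, ∃ (r : ℕ) (σi : Matrix A A ℂ), 0 < r ∧ (Pr i).trace = (r : ℂ) ∧
      IsDensity σi ∧
      ((1 : Matrix A A ℂ) ⊗ₖ Pr i) * ρ * ((1 : Matrix A A ℂ) ⊗ₖ Pr i)
        = ((((1 : Matrix A A ℂ) ⊗ₖ Pr i) * ρ).trace / (r : ℂ)) • (σi ⊗ₖ Pr i)) ∧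
  (∀ P : Matrix B B ℂ, IsProjection P → (∃ i, ¬ Commute P (Pr i)) →
      ¬ Commute ((1 : Matrix A A ℂ) ⊗ₖ P) ρ)

/-- `(Tr_B ∘ L) ⊗ id_D` applied to an operator on `A ⊗ D`. -/
def trFstApply {A B D : Type*} [Fintype B] (L : Matrix A A ℂ →ₗ[ℂ] Matrix B B ℂ)
    (M : Matrix (A × D) (A × D) ℂ) : Matrix D D ℂ :=
  Matrix.of fun d d' => (L (Matrix.of fun a a' => M (a, d) (a', d'))).trace

/-- The spectrum of the randomness-exhausting output `d(σ)`. -/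
def reoVec {n : ℕ} (lam : Fin n → ℝ) (r : Fin n → ℕ) :
    (Σ i : Fin n, Fin (r i * r i)) → ℝ :=
  fun x => lam x.1 / (r x.1 : ℝ)

/-- The spectrum of the delocalized randomness-exhausting output. -/
def dreoVec {n0 n1 : ℕ} (p : Fin n0 → Fin n1 → ℝ) (t0 : Fin n0 → ℕ) (t1 : Fin n1 → ℕ) :
    (Σ i : Fin n0, Σ j : Fin n1, Fin (t0 i) × Fin (t1 j)) → ℝ :=
  fun x => p x.1 x.2.1 / ((t0 x.1 : ℝ) * (t1 x.2.1 : ℝ))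

end

/-! The map `ρ ↦ Tr_A[U (ρ ⊗ σ) U†]` is linear. Positive semidefinite matrices span all
matrices, and each of them is a difference `(P + 1) - 1` of positive definite ones, so a linear
map sending every full-rank state to `σ` is `ρ ↦ Tr ρ • σ`. Hence compatibility is already
forced by full-rank states, which a one-dimensional ancilla supplies. In the other direction,
the `(r, r')` block of `Tr_A[(1_R ⊗ U)(ρ_RA ⊗ σ)(1_R ⊗ U)†]` is this map applied to the
`(r, r')` block of `ρ_RA`, i.e. `Tr` of that block times `σ`. -/

open scoped MatrixOrder

section Channel

variable {A B : Type*} [Fintype A] [Fintype B]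

def catalystChannel (U : Matrix (A × B) (A × B) ℂ) (σ : Matrix B B ℂ) :
    Matrix A A ℂ →ₗ[ℂ] Matrix B B ℂ where
  toFun ρ := ptraceL (U * (ρ ⊗ₖ σ) * Uᴴ)
  map_add' ρ₁ ρ₂ := by
    ext b b'
    simp only [ptraceL, Matrix.add_kronecker, Matrix.mul_add, Matrix.add_mul, Matrix.of_apply,
      Matrix.add_apply, Finset.sum_add_distrib]
  map_smul' c ρ := by
    ext b b'
    simp only [ptraceL, Matrix.smul_kronecker, Matrix.mul_smul, Matrix.smul_mul, Matrix.of_apply,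
      Matrix.smul_apply, RingHom.id_apply, Finset.smul_sum]

theorem catalystChannel_apply (U : Matrix (A × B) (A × B) ℂ) (σ : Matrix B B ℂ)
    (ρ : Matrix A A ℂ) : catalystChannel U σ ρ = ptraceL (U * (ρ ⊗ₖ σ) * Uᴴ) := rfl

end Channel

theorem LinearMap.apply_posDef_eq_trace_smul {n M : Type*} [Fintype n] [DecidableEq n]
    [AddCommGroup M] [Module ℂ M] {L : Matrix n n ℂ →ₗ[ℂ] M} {σ : M}
    (h : ∀ ρ : Matrix n n ℂ, ρ.PosDef → ρ.trace = 1 → L ρ = σ)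
    {Q : Matrix n n ℂ} (hQ : Q.PosDef) : L Q = Q.trace • σ := by
  cases isEmpty_or_nonempty n
  · rw [Subsingleton.elim Q 0, map_zero, Matrix.trace_zero, zero_smul]
  have htr : Q.trace ≠ 0 := hQ.trace_pos.ne'
  have hscaled : ((Q.trace)⁻¹ • Q).PosDef := hQ.smul (inv_pos.mpr hQ.trace_pos)
  have := h _ hscaled (by rw [Matrix.trace_smul, smul_eq_mul, inv_mul_cancel₀ htr])
  rw [map_smul] at this
  rw [← this, smul_smul, mul_inv_cancel₀ htr, one_smul]

theorem LinearMap.eq_trace_smul_of_posDef {n M : Type*} [Fintype n] [DecidableEq n]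
    [AddCommGroup M] [Module ℂ M] {L : Matrix n n ℂ →ₗ[ℂ] M} {σ : M}
    (h : ∀ ρ : Matrix n n ℂ, ρ.PosDef → ρ.trace = 1 → L ρ = σ) (X : Matrix n n ℂ) :
    L X = X.trace • σ := by
  have hspan : Submodule.span ℂ {P : Matrix n n ℂ | P.PosSemidef} = ⊤ := by
    simpa [Matrix.nonneg_iff_posSemidef] using CStarAlgebra.span_nonneg (A := Matrix n n ℂ)
  suffices L = (Matrix.traceLinearMap n ℂ ℂ).smulRight σ from congr($this X)
  refine LinearMap.ext_on hspan fun P hP => ?_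
  have hshift : L (P + 1) = (P + 1).trace • σ :=
    L.apply_posDef_eq_trace_smul h (Matrix.PosDef.posSemidef_add hP Matrix.PosDef.one)
  have hone : L 1 = (1 : Matrix n n ℂ).trace • σ :=
    L.apply_posDef_eq_trace_smul h Matrix.PosDef.one
  rw [map_add, Matrix.trace_add, add_smul, hone, add_left_inj] at hshift
  simpa using hshift

theorem oneTensor_conj_kronecker_apply {R A B : Type*} [Fintype R] [DecidableEq R] [Fintype A]
    [Fintype B] (U : Matrix (A × B) (A × B) ℂ) (M : Matrix (R × A) (R × A) ℂ)
    (σ : Matrix B B ℂ) (r r' : R) (a a' : A) (b b' : B) :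
    (oneTensor (R := R) U * (M ⊗ₖ σ) * (oneTensor (R := R) U)ᴴ) ((r, a), b) ((r', a'), b')
      = (U * ((Matrix.of fun x y => M (r, x) (r', y)) ⊗ₖ σ) * Uᴴ) (a, b) (a', b') := by
  simp [Matrix.mul_apply, Fintype.sum_prod_type, oneTensor, Finset.sum_mul,
    apply_ite (starRingEnd ℂ)]

section Compatible

variable {A B : Type*} [Fintype A] [DecidableEq A] [Fintype B] [DecidableEq B]
  {U : Matrix (A × B) (A × B) ℂ} {σ : Matrix B B ℂ}

theorem Compatible.catalystChannel_eq_trace_smul (h : Compatible U σ) (X : Matrix A A ℂ) :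
    catalystChannel U σ X = X.trace • σ :=
  (catalystChannel U σ).eq_trace_smul_of_posDef (fun ρ hρ htr => h ρ ⟨hρ.posSemidef, htr⟩) X

theorem Compatible.ptraceMid_oneTensor_conj {R : Type*} [Fintype R] [DecidableEq R]
    (h : Compatible U σ) (ρRA : Matrix (R × A) (R × A) ℂ) :
    ptraceMid (oneTensor U * (ρRA ⊗ₖ σ) * (oneTensor U)ᴴ) = ptraceR ρRA ⊗ₖ σ := by
  ext ⟨r, b⟩ ⟨r', b'⟩
  have hblock := congr_fun₂
    (h.catalystChannel_eq_trace_smul (Matrix.of fun x y => ρRA (r, x) (r', y))) b b'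
  simpa [ptraceMid, oneTensor_conj_kronecker_apply, ptraceR, catalystChannel_apply, ptraceL,
    Matrix.trace] using hblock

theorem compatible_of_forall_unit_ancilla
    (h : ∀ ρRA : Matrix (Unit × A) (Unit × A) ℂ, IsDensity ρRA →
      (ptraceL ρRA).rank = Fintype.card A →
      ptraceMid (oneTensor U * (ρRA ⊗ₖ σ) * (oneTensor U)ᴴ) = ptraceR ρRA ⊗ₖ σ) :
    Compatible U σ := by
  have hposDef : ∀ τ : Matrix A A ℂ, τ.PosDef → τ.trace = 1 → catalystChannel U σ τ = σ := by
    intro τ hτ htr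
    set ρRA : Matrix (Unit × A) (Unit × A) ℂ := τ.submatrix Prod.snd Prod.snd
    have hdens : IsDensity ρRA :=
      ⟨hτ.posSemidef.submatrix _, by simpa [ρRA, Matrix.trace, Fintype.sum_prod_type] using htr⟩
    have hmarg : ptraceL ρRA = τ := by
      ext
      simp [ρRA, ptraceL]
    have hrank : (ptraceL ρRA).rank = Fintype.card A := by
      rw [hmarg]
      exact Matrix.rank_of_isUnit τ hτ.isUnit
    ext b b'
    have hentry := congr_fun₂ (h ρRA hdens hrank) ((), b) ((), b')
    have hsum : ∑ a, τ a a = 1 := htr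
    simp only [ρRA, ptraceMid, oneTensor_conj_kronecker_apply, ptraceR, Matrix.submatrix_apply,
      Matrix.kroneckerMap_apply, Matrix.of_apply, hsum, one_mul] at hentry
    exact hentry
  intro ρ hρ
  rw [← catalystChannel_apply, (catalystChannel U σ).eq_trace_smul_of_posDef hposDef, hρ.2,
    one_smul]

end Compatible

theorem stmt_1_general {A B : Type} [Fintype A] [DecidableEq A] [Fintype B] [DecidableEq B]
    (U : Matrix (A × B) (A × B) ℂ) (σ : Matrix B B ℂ) :
    Compatible U σ ↔
      ∀ (R : Type) [Fintype R] [DecidableEq R] (ρRA : Matrix (R × A) (R × A) ℂ),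
        IsDensity ρRA → (ptraceL ρRA).rank = Fintype.card A →
        ptraceMid (oneTensor U * (ρRA ⊗ₖ σ) * (oneTensor U)ᴴ) = ptraceR ρRA ⊗ₖ σ :=
  ⟨fun h _ _ _ ρRA _ _ => h.ptraceMid_oneTensor_conj ρRA,
    fun h => compatible_of_forall_unit_ancilla (h Unit)⟩

/-- `U` is compatible with `σ` iff for every ancilla `R` and every
density matrix `ρ_RA` on `R ⊗ A` whose marginal on `A` has full rank,
`Tr_A[(1_R ⊗ U)(ρ_RA ⊗ σ)(1_R ⊗ U)†] = Tr_A[ρ_RA] ⊗ σ`. -/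
theorem stmt_1 {A B : Type} [Fintype A] [DecidableEq A] [Fintype B] [DecidableEq B]
    (U : Matrix (A × B) (A × B) ℂ) (hU : IsUnitaryMat U)
    (σ : Matrix B B ℂ) (hσ : IsDensity σ) :
    Compatible U σ ↔
      ∀ (R : Type) [Fintype R] [DecidableEq R] (ρRA : Matrix (R × A) (R × A) ℂ),
        IsDensity ρRA → (ptraceL ρRA).rank = Fintype.card A →
        ptraceMid (oneTensor U * (ρRA ⊗ₖ σ) * (oneTensor U)ᴴ) = ptraceR ρRA ⊗ₖ σ :=
  stmt_1_general U σ
end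

section
/- Let U be a bipartite unitary on A⊗B whose partial transpose U^{T_B} is unitary (a catalytic unitary), and let σ be a density matrix on B. Then U is compatible with σ, i.e., Tr_A[U(ρ⊗σ)U†] = σ for every density matrix ρ on A, if and only if [U, 1_A⊗σ] = 0. -/
open scoped Matrix Kronecker ComplexOrder Classical

/-!
Write `V = U^{T_B}`. An index computation gives
`Tr_A[U (|i⟩⟨j| ⊗ σ) U†]_{b b'} = (V† (1 ⊗ σᵀ) V)_{(j,b'),(i,b)}`.
Since density matrices span all matrices, compatibility says that the linear map
`X ↦ Tr_A[U (X ⊗ σ) U†]` is `X ↦ Tr(X) σ`, i.e. `V† (1 ⊗ σᵀ) V = 1 ⊗ σᵀ`.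
As `V` is unitary this is `[V, 1 ⊗ σᵀ] = 0`, and the partial transpose on `B` carries it to
`[U, 1 ⊗ σ] = 0`.
-/

section DensitySpan

open scoped MatrixOrder Matrix.Norms.L2Operator

theorem span_isDensity (n : Type*) [Fintype n] [DecidableEq n] :
    Submodule.span ℂ {ρ : Matrix n n ℂ | IsDensity ρ} = ⊤ := by
  rw [eq_top_iff, ← CStarAlgebra.span_nonneg, Submodule.span_le]
  rintro M (hM : 0 ≤ M)
  rw [Matrix.nonneg_iff_posSemidef] at hM
  by_cases htr : M.trace = 0
  · simp [(hM.trace_eq_zero_iff).mp htr]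
  · have hρ : IsDensity (M.trace⁻¹ • M) :=
      ⟨hM.smul (inv_nonneg.mpr hM.trace_nonneg), by rw [Matrix.trace_smul, smul_eq_mul,
        inv_mul_cancel₀ htr]⟩
    have hM_eq : M = M.trace • (M.trace⁻¹ • M) := by
      rw [smul_smul, mul_inv_cancel₀ htr, one_smul]
    rw [SetLike.mem_coe, hM_eq]
    exact Submodule.smul_mem _ _ (Submodule.subset_span hρ)

end DensitySpan

theorem LinearMap.ext_on_isDensity {n M : Type*} [Fintype n] [DecidableEq n]
    [AddCommMonoid M] [Module ℂ M] {f g : Matrix n n ℂ →ₗ[ℂ] M}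
    (h : ∀ ρ, IsDensity ρ → f ρ = g ρ) : f = g :=
  LinearMap.ext_on (span_isDensity n) fun ρ hρ => h ρ hρ

section Channel

variable {A B : Type*} [Fintype A] [DecidableEq A] [Fintype B]

def catalysisMap (U : Matrix (A × B) (A × B) ℂ) (σ : Matrix B B ℂ) :
    Matrix A A ℂ →ₗ[ℂ] Matrix B B ℂ where
  toFun X := ptraceL (U * (X ⊗ₖ σ) * Uᴴ)
  map_add' X Y := by
    ext b b'
    simp [ptraceL, Matrix.add_kronecker, Matrix.mul_add, Matrix.add_mul, Finset.sum_add_distrib]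
  map_smul' c X := by
    ext b b'
    simp [ptraceL, Matrix.smul_kronecker, Finset.mul_sum]

theorem catalysisMap_apply (U : Matrix (A × B) (A × B) ℂ) (σ : Matrix B B ℂ)
    (X : Matrix A A ℂ) :
    catalysisMap U σ X = ptraceL (U * (X ⊗ₖ σ) * Uᴴ) := rfl

theorem compatible_iff_catalysisMap_eq [DecidableEq B] (U : Matrix (A × B) (A × B) ℂ)
    (σ : Matrix B B ℂ) :
    Compatible U σ ↔ catalysisMap U σ = (Matrix.traceLinearMap A ℂ ℂ).smulRight σ := by
  refine ⟨fun h => LinearMap.ext_on_isDensity fun ρ hρ => ?_, fun h ρ hρ => ?_⟩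
  · simp [catalysisMap_apply, h ρ hρ, hρ.2]
  · simpa [catalysisMap_apply, hρ.2] using LinearMap.congr_fun h ρ

theorem ptraceL_mul_single_kronecker_mul_apply (U : Matrix (A × B) (A × B) ℂ)
    (σ : Matrix B B ℂ) (i j : A) (b b' : B) :
    ptraceL (U * (Matrix.single i j 1 ⊗ₖ σ) * Uᴴ) b b'
      = ((ptransposeSnd U)ᴴ * ((1 : Matrix A A ℂ) ⊗ₖ σᵀ) * ptransposeSnd U)
          (j, b') (i, b) := by
  simp only [ptraceL, ptransposeSnd, Matrix.of_apply, Matrix.mul_apply, Matrix.conjTranspose_apply,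
    Matrix.kroneckerMap_apply, Matrix.single_apply, Matrix.one_apply, Matrix.transpose_apply,
    Fintype.sum_prod_type, Finset.sum_mul, ite_mul, mul_ite, mul_zero, zero_mul, ite_and]
  simp only [one_mul, Finset.sum_ite_eq, Finset.sum_ite_eq', Finset.sum_ite_irrel,
    Finset.sum_const_zero, Finset.mem_univ, if_true]
  refine Finset.sum_congr rfl fun a _ => ?_
  rw [Finset.sum_comm]
  exact Finset.sum_congr rfl fun c _ => Finset.sum_congr rfl fun c' _ => by ring

theorem compatible_iff [DecidableEq B] (U : Matrix (A × B) (A × B) ℂ) (σ : Matrix B B ℂ) :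
    Compatible U σ ↔ (ptransposeSnd U)ᴴ * ((1 : Matrix A A ℂ) ⊗ₖ σᵀ) * ptransposeSnd U
      = (1 : Matrix A A ℂ) ⊗ₖ σᵀ := by
  have h_single (i j : A) : (Matrix.traceLinearMap A ℂ ℂ).smulRight σ (Matrix.single i j 1)
      = Matrix.of fun b b' => ((1 : Matrix A A ℂ) ⊗ₖ σᵀ) (j, b') (i, b) := by
    ext b b'
    by_cases hij : i = j
    · subst hij; simp [Matrix.trace_single_eq_same]
    · simp [Matrix.trace_single_eq_of_ne _ _ _ hij, Matrix.one_apply_ne' hij]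
  rw [compatible_iff_catalysisMap_eq]
  constructor
  · intro h
    ext ⟨j, b'⟩ ⟨i, b⟩
    have := congr_fun₂ (LinearMap.congr_fun h (Matrix.single i j 1)) b b'
    rwa [h_single, catalysisMap_apply, ptraceL_mul_single_kronecker_mul_apply] at this
  · intro h
    refine Matrix.ext_linearMap ℂ fun i j => LinearMap.ext_ring ?_
    ext b b'
    simp only [LinearMap.comp_apply, Matrix.singleLinearMap_apply, h_single]
    rw [catalysisMap_apply, ptraceL_mul_single_kronecker_mul_apply, h]
    rfl

end Channel

section PartialTranspose

variable {A B : Type*}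

@[simp]
theorem ptransposeSnd_ptransposeSnd (M : Matrix (A × B) (A × B) ℂ) :
    ptransposeSnd (ptransposeSnd M) = M := rfl

theorem ptransposeSnd_injective : Function.Injective (ptransposeSnd (A := A) (B := B)) :=
  Function.LeftInverse.injective ptransposeSnd_ptransposeSnd

variable [Fintype A] [DecidableEq A] [Fintype B]

theorem ptransposeSnd_mul_one_kronecker (M : Matrix (A × B) (A × B) ℂ) (σ : Matrix B B ℂ) :
    ptransposeSnd (M * ((1 : Matrix A A ℂ) ⊗ₖ σ))
      = ((1 : Matrix A A ℂ) ⊗ₖ σᵀ) * ptransposeSnd M := by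
  ext ⟨a, b⟩ ⟨a', b'⟩
  simp [ptransposeSnd, Matrix.mul_apply, Fintype.sum_prod_type, Matrix.one_apply, mul_comm]

theorem ptransposeSnd_one_kronecker_mul (M : Matrix (A × B) (A × B) ℂ) (σ : Matrix B B ℂ) :
    ptransposeSnd (((1 : Matrix A A ℂ) ⊗ₖ σ) * M)
      = ptransposeSnd M * ((1 : Matrix A A ℂ) ⊗ₖ σᵀ) := by
  ext ⟨a, b⟩ ⟨a', b'⟩
  simp [ptransposeSnd, Matrix.mul_apply, Fintype.sum_prod_type, Matrix.one_apply, mul_comm]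

end PartialTranspose

theorem Unitary.star_mul_mul_eq_self_iff {R : Type*} [Monoid R] [StarMul R] {u : R}
    (hu : u ∈ unitary R) (m : R) : star u * m * u = m ↔ m * u = u * m := by
  constructor
  · intro h
    calc m * u = u * (star u * m * u) := by
          rw [← mul_assoc, ← mul_assoc, Unitary.mul_star_self_of_mem hu, one_mul]
      _ = u * m := by rw [h]
  · intro h
    rw [mul_assoc, h, ← mul_assoc, Unitary.star_mul_self_of_mem hu, one_mul]

theorem stmt_3_general {A B : Type} [Fintype A] [DecidableEq A] [Fintype B] [DecidableEq B]
    (U : Matrix (A × B) (A × B) ℂ)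
    (hUTB : IsUnitaryMat (ptransposeSnd U))
    (σ : Matrix B B ℂ) :
    Compatible U σ ↔
      U * ((1 : Matrix A A ℂ) ⊗ₖ σ) = ((1 : Matrix A A ℂ) ⊗ₖ σ) * U := by
  have hV : ptransposeSnd U ∈ unitary (Matrix (A × B) (A × B) ℂ) := ⟨hUTB.2, hUTB.1⟩
  rw [← ptransposeSnd_injective.eq_iff, ptransposeSnd_mul_one_kronecker,
    ptransposeSnd_one_kronecker_mul, compatible_iff, ← Matrix.star_eq_conjTranspose]
  exact Unitary.star_mul_mul_eq_self_iff hV _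

/-- a catalytic unitary `U` (one with unitary partial transpose on `B`)
is compatible with a density matrix `σ` on `B` iff `[U, 1_A ⊗ σ] = 0`. -/
theorem stmt_3 {A B : Type} [Fintype A] [DecidableEq A] [Fintype B] [DecidableEq B]
    (U : Matrix (A × B) (A × B) ℂ) (hU : IsUnitaryMat U)
    (hUTB : IsUnitaryMat (ptransposeSnd U))
    (σ : Matrix B B ℂ) (hσ : IsDensity σ) :
    Compatible U σ ↔
      U * ((1 : Matrix A A ℂ) ⊗ₖ σ) = ((1 : Matrix A A ℂ) ⊗ₖ σ) * U :=
  stmt_3_general U hUTB σ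
end

section
/- Let ρ_AB be a bipartite density matrix that is PC-Q with respect to the essential decomposition A = ⊕_i A_i (projectors Π_i onto A_i), with type I index set I and type II index set II. A unital quantum channel N on A satisfies (N⊗id_B)(ρ_AB) = ρ_AB if and only if N admits a Kraus representation N(X) = ∑_j K_j X K_j† in which every Kraus operator is block diagonal of the standard form K_j = ⊕_{i∈I} α_i^{(j)} Π_i ⊕ ⊕_{i∈II} K_i^{(j)}, with complex scalars α_i^{(j)} for i∈I and operators K_i^{(j)} on A_i for i∈II; equivalently, N preserves every subspace A_i and acts as the identity on operators supported on A_i for every i∈I. -/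
open scoped Matrix Kronecker ComplexOrder Classical

/-!
Write `N = ∑ⱼ Kⱼ · Kⱼ†`. If `N ⊗ id` fixes `ρ`, trace preservation and unitality make
`∑ⱼ tr (Cⱼ Cⱼ†)` vanish for `Cⱼ = [Kⱼ ⊗ 1, ρ]`, so every `Kⱼ ⊗ 1` commutes with `ρ`.
Then so do the spectral projections of the real and imaginary parts of `Kⱼ` (tensored with `1`),
because `X ↦ X ⊗ 1` is a star-algebra map and hence commutes with the functional calculus.
Condition (iii) of the essential decomposition makes these projections, hence `Kⱼ`, commute with
every `Πᵢ`; total quantumness of a type I block makes every such projection below `Πᵢ` equal to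
`0` or `Πᵢ`, so `Πᵢ Kⱼ Πᵢ` is a multiple of `Πᵢ`.

Conversely, Kraus operators of this form commute with the `Πᵢ`, so `N` preserves every block,
and on a type I block `N` multiplies by `∑ⱼ |αᵢ⁽ʲ⁾|² = 1`. Such an `N` fixes every `Πᵢ` by
unitality, so it fixes each block of `ρ`: the type I blocks directly, the type II blocks
`Πᵢ ⊗ σᵢ` because `N Πᵢ = Πᵢ`.
-/

open Matrix

section KroneckerOne

variable {A B : Type} [Fintype A] [DecidableEq A] [Fintype B] [DecidableEq B]

variable (A B) in
def kroneckerOneStarAlgHom : Matrix A A ℂ →⋆ₐ[ℂ] Matrix (A × B) (A × B) ℂ where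
  toFun X := X ⊗ₖ 1
  map_one' := one_kronecker_one
  map_mul' X Y := by rw [← mul_kronecker_mul, one_mul]
  map_zero' := zero_kronecker _
  map_add' X Y := add_kronecker _ _ _
  commutes' c := by simp [Algebra.algebraMap_eq_smul_one, smul_kronecker]
  map_star' X := by simp [star_eq_conjTranspose, conjTranspose_kronecker]

lemma mul_kronecker_one (X Y : Matrix A A ℂ) :
    (X * Y) ⊗ₖ (1 : Matrix B B ℂ) = (X ⊗ₖ 1) * (Y ⊗ₖ 1) :=
  map_mul (kroneckerOneStarAlgHom A B) X Y

lemma cfc_kronecker_one {H : Matrix A A ℂ} (hH : H.IsHermitian) (f : ℝ → ℝ) :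
    cfc f H ⊗ₖ (1 : Matrix B B ℂ) = cfc f (H ⊗ₖ (1 : Matrix B B ℂ)) :=
  (kroneckerOneStarAlgHom A B).map_cfc f H (H.finite_real_spectrum.continuousOn f)
    (LinearMap.continuous_of_finiteDimensional (kroneckerOneStarAlgHom A B).toLinearMap)
    hH.isSelfAdjoint (hH.isSelfAdjoint.map (kroneckerOneStarAlgHom A B))

variable {ρ : Matrix (A × B) (A × B) ℂ}

lemma Commute.cfc_kronecker_one {H : Matrix A A ℂ} (hH : H.IsHermitian)
    (h : Commute (H ⊗ₖ (1 : Matrix B B ℂ)) ρ) (f : ℝ → ℝ) :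
    Commute (cfc f H ⊗ₖ (1 : Matrix B B ℂ)) ρ :=
  _root_.cfc_kronecker_one (B := B) hH f ▸ h.cfc_real f

omit [DecidableEq A] in
lemma Commute.conjTranspose_kronecker_one (hρ : ρ.IsHermitian) {T : Matrix A A ℂ}
    (h : Commute (T ⊗ₖ (1 : Matrix B B ℂ)) ρ) :
    Commute (Tᴴ ⊗ₖ (1 : Matrix B B ℂ)) ρ := by
  have h' := congrArg conjTranspose h.eq
  simp only [conjTranspose_mul, conjTranspose_kronecker, conjTranspose_one, hρ.eq] at h'
  exact h'.symm

end KroneckerOne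

section Eigenproj

variable {A : Type} [Fintype A] [DecidableEq A]

noncomputable def eigenproj (H : Matrix A A ℂ) (μ : ℝ) : Matrix A A ℂ :=
  cfc (fun x : ℝ => if x = μ then (1 : ℝ) else 0) H

variable {H : Matrix A A ℂ}

protected lemma Matrix.continuousOn_spectrum (H : Matrix A A ℂ) (f : ℝ → ℝ) :
    ContinuousOn f (spectrum ℝ H) :=
  H.finite_real_spectrum.continuousOn f

lemma isProjection_eigenproj (μ : ℝ) : IsProjection (eigenproj H μ) := by
  refine ⟨IsSelfAdjoint.isHermitian (cfc_predicate (p := IsSelfAdjoint) _ H), ?_⟩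
  rw [eigenproj, ← cfc_mul _ _ H (H.continuousOn_spectrum _) (H.continuousOn_spectrum _)]
  congr 1
  ext x
  split_ifs <;> simp

lemma eigenproj_mul_eigenproj_of_ne {μ ν : ℝ} (h : μ ≠ ν) :
    eigenproj H μ * eigenproj H ν = 0 := by
  rw [eigenproj, eigenproj, ← cfc_mul _ _ H (H.continuousOn_spectrum _) (H.continuousOn_spectrum _)]
  convert cfc_zero ℝ H using 2
  ext x
  split_ifs with h₁ h₂ <;> simp_all

lemma mul_eigenproj (hH : H.IsHermitian) (μ : ℝ) :
    H * eigenproj H μ = μ • eigenproj H μ := calc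
  _ = cfc (fun x : ℝ => x) H * eigenproj H μ := by rw [cfc_id' ℝ H hH.isSelfAdjoint]
  _ = cfc (fun x : ℝ => μ • if x = μ then (1 : ℝ) else 0) H := by
    rw [eigenproj, ← cfc_mul _ _ H (H.continuousOn_spectrum _) (H.continuousOn_spectrum _)]
    congr 1
    ext x
    split_ifs with h <;> simp [h]
  _ = μ • eigenproj H μ := cfc_smul _ _ H (H.continuousOn_spectrum _)

lemma eigenproj_mul (hH : H.IsHermitian) (μ : ℝ) :
    eigenproj H μ * H = μ • eigenproj H μ := by
  rw [eigenproj, ((Commute.refl H).cfc_real _).eq]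
  exact mul_eigenproj hH μ

lemma sum_smul_eigenproj (hH : H.IsHermitian) :
    ∑ μ ∈ H.finite_real_spectrum.toFinset, μ • eigenproj H μ = H := calc
  _ = cfc (∑ μ ∈ H.finite_real_spectrum.toFinset,
        fun x : ℝ => μ • if x = μ then (1 : ℝ) else 0) H := by
    rw [cfc_sum _ _ _ (fun _ _ => H.continuousOn_spectrum _)]
    exact Finset.sum_congr rfl fun μ _ => (cfc_smul _ _ H (H.continuousOn_spectrum _)).symm
  _ = cfc (fun x : ℝ => x) H := by
    refine cfc_congr fun x hx => ?_
    simp [Finset.sum_apply, Set.Finite.mem_toFinset, hx]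
  _ = H := cfc_id' ℝ H hH.isSelfAdjoint

lemma Commute.of_forall_eigenproj (hH : H.IsHermitian) {X : Matrix A A ℂ}
    (h : ∀ μ, Commute (eigenproj H μ) X) : Commute H X := by
  rw [← sum_smul_eigenproj hH]
  exact Commute.sum_left _ _ _ fun μ _ => (h μ).smul_left μ

lemma exists_eq_smul_of_eigenproj (hH : H.IsHermitian) {P : Matrix A A ℂ}
    (h : ∀ μ ≠ 0, eigenproj H μ = 0 ∨ eigenproj H μ = P) : ∃ c : ℝ, H = c • P := by
  by_cases hzero : ∀ μ ∈ H.finite_real_spectrum.toFinset, μ ≠ 0 → eigenproj H μ = 0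
  · refine ⟨0, ?_⟩
    rw [zero_smul, ← sum_smul_eigenproj hH]
    refine Finset.sum_eq_zero fun μ hμ => ?_
    rcases eq_or_ne μ 0 with rfl | hμ0
    · exact zero_smul _ _
    · rw [hzero μ hμ hμ0, smul_zero]
  push Not at hzero
  obtain ⟨μ₀, hμ₀, hμ₀0, hE₀⟩ := hzero
  have hP : eigenproj H μ₀ = P := (h μ₀ hμ₀0).resolve_left hE₀
  refine ⟨μ₀, ?_⟩
  rw [← sum_smul_eigenproj hH, Finset.sum_eq_single_of_mem μ₀ hμ₀, hP]
  intro μ _ hne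
  rcases eq_or_ne μ 0 with rfl | hμ0
  · exact zero_smul _ _
  rcases h μ hμ0 with hE | hE
  · rw [hE, smul_zero]
  · refine absurd ?_ hE₀
    calc eigenproj H μ₀ = eigenproj H μ * eigenproj H μ₀ := by
          rw [hE, ← hP, (isProjection_eigenproj μ₀).2]
      _ = 0 := eigenproj_mul_eigenproj_of_ne hne

lemma mul_eigenproj_of_mul_eq (hH : H.IsHermitian) {μ : ℝ} (hμ : μ ≠ 0)
    {P : Matrix A A ℂ} (hP : P * H = H) : P * eigenproj H μ = eigenproj H μ := by
  have hE : eigenproj H μ = μ⁻¹ • (H * eigenproj H μ) := by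
    rw [mul_eigenproj hH, smul_smul, inv_mul_cancel₀ hμ, one_smul]
  rw [hE, mul_smul_comm, ← mul_assoc, hP]

lemma eigenproj_mul_of_mul_eq (hH : H.IsHermitian) {μ : ℝ} (hμ : μ ≠ 0)
    {P : Matrix A A ℂ} (hP : H * P = H) : eigenproj H μ * P = eigenproj H μ := by
  have hE : eigenproj H μ = μ⁻¹ • (eigenproj H μ * H) := by
    rw [eigenproj_mul hH, smul_smul, inv_mul_cancel₀ hμ, one_smul]
  rw [hE, smul_mul_assoc, mul_assoc, hP]

end Eigenproj

section LocalCommutant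

open scoped ComplexStarModule

variable {A B : Type} [Fintype A] [DecidableEq A] [Fintype B] [DecidableEq B]
  {ρ : Matrix (A × B) (A × B) ℂ}

omit [DecidableEq A] in
lemma Commute.realPart_kronecker_one (hρ : ρ.IsHermitian) {T : Matrix A A ℂ}
    (h : Commute (T ⊗ₖ (1 : Matrix B B ℂ)) ρ) :
    Commute ((ℜ T : Matrix A A ℂ) ⊗ₖ (1 : Matrix B B ℂ)) ρ := by
  rw [realPart_apply_coe, smul_kronecker, add_kronecker]
  exact (h.add_left (h.conjTranspose_kronecker_one hρ)).smul_left _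

lemma Commute.imaginaryPart_kronecker_one (hρ : ρ.IsHermitian) {T : Matrix A A ℂ}
    (h : Commute (T ⊗ₖ (1 : Matrix B B ℂ)) ρ) :
    Commute ((ℑ T : Matrix A A ℂ) ⊗ₖ (1 : Matrix B B ℂ)) ρ := by
  have hsub : (T - star T) ⊗ₖ (1 : Matrix B B ℂ) = T ⊗ₖ 1 - Tᴴ ⊗ₖ 1 :=
    map_sub (kroneckerOneStarAlgHom A B) T (star T)
  rw [imaginaryPart_apply_coe, smul_kronecker, smul_kronecker, hsub]
  exact ((h.sub_left (h.conjTranspose_kronecker_one hρ)).smul_left _).smul_left _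

lemma Commute.of_kronecker_one (hρ : ρ.IsHermitian) {Q : Matrix A A ℂ}
    (hQ : ∀ P, IsProjection P → Commute (P ⊗ₖ (1 : Matrix B B ℂ)) ρ → Commute P Q)
    {T : Matrix A A ℂ} (h : Commute (T ⊗ₖ (1 : Matrix B B ℂ)) ρ) : Commute T Q := by
  have hHerm : ∀ H : Matrix A A ℂ, H.IsHermitian → Commute (H ⊗ₖ (1 : Matrix B B ℂ)) ρ →
      Commute H Q := fun H hH hHρ =>
    .of_forall_eigenproj hH fun μ =>
      hQ _ (isProjection_eigenproj μ) (hHρ.cfc_kronecker_one hH _)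
  rw [← realPart_add_I_smul_imaginaryPart T]
  exact (hHerm _ (ℜ T).2.isHermitian (h.realPart_kronecker_one hρ)).add_left
    ((hHerm _ (ℑ T).2.isHermitian (h.imaginaryPart_kronecker_one hρ)).smul_left _)

lemma exists_compress_eq_smul_of_isHermitian {P : Matrix A A ℂ} (hP : IsProjection P)
    (hPρ : Commute (P ⊗ₖ (1 : Matrix B B ℂ)) ρ)
    (hmin : ∀ Q, IsProjection Q → Q * P = Q → P * Q = Q →
      Commute (Q ⊗ₖ (1 : Matrix B B ℂ))
        ((P ⊗ₖ (1 : Matrix B B ℂ)) * ρ * (P ⊗ₖ (1 : Matrix B B ℂ))) → Q = 0 ∨ Q = P)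
    {H : Matrix A A ℂ} (hH : H.IsHermitian) (h : Commute (H ⊗ₖ (1 : Matrix B B ℂ)) ρ) :
    ∃ c : ℝ, P * H * P = c • P := by
  set H' := P * H * P
  have hH' : H'.IsHermitian := by
    simp only [H', IsHermitian, conjTranspose_mul, hP.1.eq, hH.eq, mul_assoc]
  have hH'P : H' * P = H' := by simp only [H', mul_assoc, hP.2]
  have hPH' : P * H' = H' := by simp only [H', ← mul_assoc, hP.2]
  have hPH'1 : Commute (P ⊗ₖ (1 : Matrix B B ℂ)) (H' ⊗ₖ 1) := by
    rw [commute_iff_eq, ← mul_kronecker_one, ← mul_kronecker_one, hH'P, hPH']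
  have hH'ρ : Commute (H' ⊗ₖ (1 : Matrix B B ℂ))
      ((P ⊗ₖ (1 : Matrix B B ℂ)) * ρ * (P ⊗ₖ (1 : Matrix B B ℂ))) := by
    have : Commute (H' ⊗ₖ (1 : Matrix B B ℂ)) ρ := by
      rw [mul_kronecker_one, mul_kronecker_one]
      exact (hPρ.mul_left h).mul_left hPρ
    exact (hPH'1.symm.mul_right this).mul_right hPH'1.symm
  refine exists_eq_smul_of_eigenproj hH' fun μ hμ => hmin _ (isProjection_eigenproj μ)
    (eigenproj_mul_of_mul_eq hH' hμ hH'P) (mul_eigenproj_of_mul_eq hH' hμ hPH')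
    (hH'ρ.cfc_kronecker_one hH' _)

lemma exists_compress_eq_smul {P : Matrix A A ℂ} (hρ : ρ.IsHermitian) (hP : IsProjection P)
    (hPρ : Commute (P ⊗ₖ (1 : Matrix B B ℂ)) ρ)
    (hmin : ∀ Q, IsProjection Q → Q * P = Q → P * Q = Q →
      Commute (Q ⊗ₖ (1 : Matrix B B ℂ))
        ((P ⊗ₖ (1 : Matrix B B ℂ)) * ρ * (P ⊗ₖ (1 : Matrix B B ℂ))) → Q = 0 ∨ Q = P)
    {T : Matrix A A ℂ} (h : Commute (T ⊗ₖ (1 : Matrix B B ℂ)) ρ) :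
    ∃ α : ℂ, P * T * P = α • P := by
  obtain ⟨c₁, hc₁⟩ := exists_compress_eq_smul_of_isHermitian hP hPρ hmin (ℜ T).2.isHermitian
    (h.realPart_kronecker_one hρ)
  obtain ⟨c₂, hc₂⟩ := exists_compress_eq_smul_of_isHermitian hP hPρ hmin (ℑ T).2.isHermitian
    (h.imaginaryPart_kronecker_one hρ)
  refine ⟨c₁ + Complex.I * c₂, ?_⟩
  conv_lhs => rw [← realPart_add_I_smul_imaginaryPart T]
  rw [mul_add, add_mul, mul_smul_comm, smul_mul_assoc, hc₁, hc₂, add_smul, mul_smul]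
  rfl

end LocalCommutant

section Kraus

variable {X ι : Type} [Fintype X] [DecidableEq X] [Fintype ι]

lemma Commute.of_sum_conj_eq_self {L : ι → Matrix X X ℂ} {ρ : Matrix X X ℂ}
    (hρ : ρ.IsHermitian) (htp : ∑ j, (L j)ᴴ * L j = 1) (hun : ∑ j, L j * (L j)ᴴ = 1)
    (hfix : ∑ j, L j * ρ * (L j)ᴴ = ρ) (j : ι) : Commute (L j) ρ := by
  set C : ι → Matrix X X ℂ := fun j => L j * ρ - ρ * L j
  have hexpand : ∀ j, (C j * (C j)ᴴ).trace = (L j * (ρ * ρ) * (L j)ᴴ).trace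
      - (L j * ρ * (L j)ᴴ * ρ).trace - (ρ * (L j * ρ * (L j)ᴴ)).trace
      + (ρ * (L j * (L j)ᴴ) * ρ).trace := fun j => by
    simp only [C, conjTranspose_sub, conjTranspose_mul, hρ.eq, ← trace_sub, ← trace_add]
    congr 1
    noncomm_ring
  have hsum : ∑ j, (C j * (C j)ᴴ).trace = 0 := by
    -- after cyclicity, the four sums are `tr ρ²` by `htp`, `hfix`, `hfix` and `hun`
    have hcycle : ∀ j, (L j * (ρ * ρ) * (L j)ᴴ).trace = (ρ * ρ * ((L j)ᴴ * L j)).trace :=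
      fun j => by rw [mul_assoc, trace_mul_comm, mul_assoc]
    simp only [hexpand, hcycle, Finset.sum_add_distrib, Finset.sum_sub_distrib, ← trace_sum,
      ← Finset.sum_mul, ← Finset.mul_sum, hfix, htp, hun, mul_one]
    abel
  have hzero := (Finset.sum_eq_zero_iff_of_nonneg fun j _ =>
    (posSemidef_self_mul_conjTranspose (C j)).trace_nonneg).mp hsum j (Finset.mem_univ j)
  exact sub_eq_zero.mp (trace_mul_conjTranspose_self_eq_zero_iff.mp hzero)

end Kraus

lemma eq_sum_mul_mul_of_commute {R ι : Type*} [Semiring R] [Fintype ι] {P : ι → R}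
    (hsum : ∑ i, P i = 1) (hidem : ∀ i, P i * P i = P i) {M : R}
    (hc : ∀ i, Commute (P i) M) : M = ∑ i, P i * M * P i := calc
  M = M * ∑ i, P i := by rw [hsum, mul_one]
  _ = ∑ i, P i * M * P i := by
    rw [Finset.mul_sum]
    refine Finset.sum_congr rfl fun i _ => ?_
    conv_lhs => rw [← hidem i]
    rw [← mul_assoc, ← (hc i).eq]

section BlockForm

variable {A : Type} [Fintype A] [DecidableEq A] {n : ℕ} {Pr : Fin n → Matrix A A ℂ}
  {I II : Finset (Fin n)}

lemma eq_blockForm_iff (hidem : ∀ i, Pr i * Pr i = Pr i)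
    (horth : ∀ i j, i ≠ j → Pr i * Pr j = 0) (hsum : ∑ i, Pr i = 1)
    (hdisj : Disjoint I II) (hunion : I ∪ II = Finset.univ) (K : Matrix A A ℂ) (α : Fin n → ℂ) :
    K = ∑ i ∈ I, α i • Pr i + ∑ i ∈ II, Pr i * K * Pr i ↔
      (∀ i, Commute K (Pr i)) ∧ ∀ i ∈ I, Pr i * K * Pr i = α i • Pr i := by
  have hPP : ∀ i j, Pr i * Pr j = if i = j then Pr j else 0 := fun i j => by
    split_ifs with h
    · rw [h, hidem]
    · exact horth i j h
  constructor
  · intro hK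
    have hright : ∀ i, K * Pr i =
        (if i ∈ I then α i • Pr i else 0) + if i ∈ II then Pr i * K * Pr i else 0 := by
      intro i
      conv_lhs => rw [hK]
      simp only [add_mul, Finset.sum_mul, smul_mul_assoc, mul_assoc, hPP, smul_ite, mul_ite,
        smul_zero, mul_zero, Finset.sum_ite_eq']
    have hleft : ∀ i, Pr i * K =
        (if i ∈ I then α i • Pr i else 0) + if i ∈ II then Pr i * K * Pr i else 0 := by
      intro i
      conv_lhs => rw [hK]
      simp only [mul_add, Finset.mul_sum, mul_smul_comm, ← mul_assoc, hPP, smul_ite, ite_mul,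
        smul_zero, zero_mul, Finset.sum_ite_eq]
    refine ⟨fun i => (hright i).trans (hleft i).symm, fun i hi => ?_⟩
    rw [mul_assoc, hright i, if_pos hi, if_neg (Finset.disjoint_left.mp hdisj hi), add_zero,
      mul_smul_comm, hidem]
  · rintro ⟨hc, hI⟩
    conv_lhs => rw [eq_sum_mul_mul_of_commute hsum hidem fun i => (hc i).symm, ← hunion]
    rw [Finset.sum_union hdisj]
    exact congrArg (· + _) (Finset.sum_congr rfl hI)

end BlockForm

section ExtendFst

variable {A A' B : Type}

lemma submatrix_kronecker_one_mul_mul [Fintype A] [Fintype B] [DecidableEq B]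
    (K : Matrix A' A ℂ) (L : Matrix A A' ℂ) (M : Matrix (A × B) (A × B) ℂ) (b b' : B) :
    ((K ⊗ₖ (1 : Matrix B B ℂ)) * M * (L ⊗ₖ (1 : Matrix B B ℂ))).submatrix (·, b) (·, b') =
      K * M.submatrix (·, b) (·, b') * L := by
  ext a a'
  simp [mul_apply, Fintype.sum_prod_type, one_apply, Finset.sum_mul]

lemma extendFst_conj_kronecker_one [Fintype A] [Fintype B] [DecidableEq B]
    {N : Matrix A A ℂ →ₗ[ℂ] Matrix A A ℂ} {P : Matrix A A ℂ}
    (hP : ∀ X, N (P * X * P) = P * X * P) (M : Matrix (A × B) (A × B) ℂ) :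
    extendFst N ((P ⊗ₖ (1 : Matrix B B ℂ)) * M * (P ⊗ₖ (1 : Matrix B B ℂ))) =
      (P ⊗ₖ (1 : Matrix B B ℂ)) * M * (P ⊗ₖ (1 : Matrix B B ℂ)) := by
  ext ⟨a, b⟩ ⟨a', b'⟩
  change N (submatrix _ _ _) a a' = _
  rw [submatrix_kronecker_one_mul_mul, hP, ← submatrix_kronecker_one_mul_mul]
  rfl

variable (N : Matrix A A ℂ →ₗ[ℂ] Matrix A' A' ℂ)

lemma extendFst_apply (M : Matrix (A × B) (A × B) ℂ) (a a' : A') (b b' : B) :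
    extendFst N M (a, b) (a', b') = N (M.submatrix (·, b) (·, b')) a a' := rfl

lemma extendFst_sum {ι : Type*} (s : Finset ι) (M : ι → Matrix (A × B) (A × B) ℂ) :
    extendFst N (∑ i ∈ s, M i) = ∑ i ∈ s, extendFst N (M i) := by
  ext ⟨a, b⟩ ⟨a', b'⟩
  have : (∑ i ∈ s, M i).submatrix (·, b) (·, b') = ∑ i ∈ s, (M i).submatrix (·, b) (·, b') := by
    ext; simp [Matrix.sum_apply]
  simp [extendFst_apply, this, Matrix.sum_apply]

lemma extendFst_smul (c : ℂ) (M : Matrix (A × B) (A × B) ℂ) :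
    extendFst N (c • M) = c • extendFst N M := by
  ext ⟨a, b⟩ ⟨a', b'⟩
  simp [extendFst_apply, submatrix_smul]

lemma extendFst_kronecker (X : Matrix A A ℂ) (Y : Matrix B B ℂ) :
    extendFst N (X ⊗ₖ Y) = N X ⊗ₖ Y := by
  ext ⟨a, b⟩ ⟨a', b'⟩
  have : (X ⊗ₖ Y).submatrix (·, b) (·, b') = Y b b' • X := by
    ext; simp [mul_comm]
  simp [extendFst_apply, this, mul_comm]

lemma extendFst_eq_sum_kraus [Fintype A] [Fintype B] [DecidableEq B] {m : ℕ}
    (K : Fin m → Matrix A' A ℂ) (hrep : ∀ M, N M = ∑ j, K j * M * (K j)ᴴ)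
    (M : Matrix (A × B) (A × B) ℂ) :
    extendFst N M = ∑ j, (K j ⊗ₖ (1 : Matrix B B ℂ)) * M * (K j ⊗ₖ (1 : Matrix B B ℂ))ᴴ := by
  ext ⟨a, b⟩ ⟨a', b'⟩
  simp only [extendFst_apply, hrep, Matrix.sum_apply, conjTranspose_kronecker, conjTranspose_one]
  refine Finset.sum_congr rfl fun j _ => ?_
  rw [← submatrix_kronecker_one_mul_mul]
  rfl

end ExtendFst

section FixedChannels

variable {A B : Type} [Fintype A] [DecidableEq A] [Fintype B] [DecidableEq B]
  {N : Matrix A A ℂ →ₗ[ℂ] Matrix A A ℂ} {m : ℕ} {K : Fin m → Matrix A A ℂ}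

lemma sum_kronecker_one_conjTranspose_mul (h : ∑ j, (K j)ᴴ * K j = 1) :
    ∑ j, (K j ⊗ₖ (1 : Matrix B B ℂ))ᴴ * (K j ⊗ₖ (1 : Matrix B B ℂ)) = 1 := by
  simp only [conjTranspose_kronecker, conjTranspose_one, ← mul_kronecker_one]
  exact (map_sum (kroneckerOneStarAlgHom A B) _ _).symm.trans (by simp [h])

lemma sum_kronecker_one_mul_conjTranspose (h : ∑ j, K j * (K j)ᴴ = 1) :
    ∑ j, (K j ⊗ₖ (1 : Matrix B B ℂ)) * (K j ⊗ₖ (1 : Matrix B B ℂ))ᴴ = 1 := by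
  simp only [conjTranspose_kronecker, conjTranspose_one, ← mul_kronecker_one]
  exact (map_sum (kroneckerOneStarAlgHom A B) _ _).symm.trans (by simp [h])

omit [DecidableEq A] in
lemma map_compress_eq_compress_of_commute {P : Matrix A A ℂ} (hP : IsProjection P)
    (hrep : ∀ X, N X = ∑ j, K j * X * (K j)ᴴ) (hc : ∀ j, Commute (K j) P) (X : Matrix A A ℂ) :
    N (P * X * P) = P * N (P * X * P) * P := by
  rw [hrep, Finset.mul_sum, Finset.sum_mul]
  refine Finset.sum_congr rfl fun j _ => ?_
  have hKP : P * K j * P = K j * P := by rw [← (hc j).eq, mul_assoc, hP.2]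
  have hPK : P * (K j)ᴴ * P = P * (K j)ᴴ := by
    have hc' := (hc j).star_star
    rw [star_eq_conjTranspose, star_eq_conjTranspose, hP.1.eq] at hc'
    rw [mul_assoc, hc'.eq, ← mul_assoc, hP.2]
  calc K j * (P * X * P) * (K j)ᴴ = P * K j * P * X * (P * (K j)ᴴ * P) := by
        rw [hKP, hPK]; simp only [mul_assoc]
    _ = P * (K j * (P * X * P) * (K j)ᴴ) * P := by simp only [mul_assoc]

lemma map_compress_of_mul_eq_smul {P : Matrix A A ℂ} (hP : IsProjection P)
    (hrep : ∀ X, N X = ∑ j, K j * X * (K j)ᴴ) (htp : ∑ j, (K j)ᴴ * K j = 1)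
    {α : Fin m → ℂ} (hα : ∀ j, K j * P = α j • P) (X : Matrix A A ℂ) :
    N (P * X * P) = P * X * P := by
  have hα' : ∀ j, P * (K j)ᴴ = star (α j) • P := fun j => by
    simpa [hP.1.eq] using congrArg conjTranspose (hα j)
  have hweights : ∑ j, (star (α j) * α j) • P = P := calc
    _ = P * (∑ j, (K j)ᴴ * K j) * P := by
        simp only [Finset.mul_sum, Finset.sum_mul]
        refine Finset.sum_congr rfl fun j _ => ?_
        rw [mul_assoc, mul_assoc, hα j, ← mul_assoc, hα' j, smul_mul_smul_comm, hP.2]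
    _ = P := by rw [htp, mul_one, hP.2]
  calc N (P * X * P) = ∑ j, (star (α j) * α j) • (P * X * P) := by
        rw [hrep]
        refine Finset.sum_congr rfl fun j _ => ?_
        rw [show K j * (P * X * P) * (K j)ᴴ = K j * P * X * (P * (K j)ᴴ) by
          simp only [mul_assoc], hα j, hα' j]
        simp only [smul_mul_assoc, mul_smul_comm, smul_smul, mul_comm]
    _ = P * X * P := by
        simp only [← smul_mul_assoc, ← Finset.sum_mul, hweights]

variable {ρ : Matrix (A × B) (A × B) ℂ} {n : ℕ} {Pr : Fin n → Matrix A A ℂ} {I II : Finset (Fin n)}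

variable (N Pr I II) in
def HasBlockFormKraus : Prop :=
  ∃ (m : ℕ) (K : Fin m → Matrix A A ℂ),
    (∀ X, N X = ∑ j, K j * X * (K j)ᴴ) ∧ (∑ j, (K j)ᴴ * K j = 1) ∧
    ∀ j, ∃ α : Fin n → ℂ, K j = ∑ i ∈ I, α i • Pr i + ∑ i ∈ II, Pr i * K j * Pr i

variable (N Pr I) in
def PreservesBlocksFixingTypeI : Prop :=
  (∀ i, ∀ X : Matrix A A ℂ, N (Pr i * X * Pr i) = Pr i * N (Pr i * X * Pr i) * Pr i) ∧
    ∀ i ∈ I, ∀ X : Matrix A A ℂ, N (Pr i * X * Pr i) = Pr i * X * Pr i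

lemma blockForm_of_extendFst_eq (hρ : ρ.IsHermitian) (hess : EssDecompFst ρ Pr I II)
    (hrep : ∀ X, N X = ∑ j, K j * X * (K j)ᴴ) (htp : ∑ j, (K j)ᴴ * K j = 1) (hNu : N 1 = 1)
    (hfix : extendFst N ρ = ρ) (j : Fin m) :
    ∃ α : Fin n → ℂ, K j = ∑ i ∈ I, α i • Pr i + ∑ i ∈ II, Pr i * K j * Pr i := by
  obtain ⟨hproj, horth, hsum, -, hdisj, hunion, hcomm, hTQ, -, hsep⟩ := hess
  have hun : ∑ j, K j * (K j)ᴴ = 1 := by simpa [hrep] using hNu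
  have hKρ : Commute (K j ⊗ₖ (1 : Matrix B B ℂ)) ρ :=
    .of_sum_conj_eq_self hρ (sum_kronecker_one_conjTranspose_mul htp)
      (sum_kronecker_one_mul_conjTranspose hun)
      ((extendFst_eq_sum_kraus N K hrep ρ).symm.trans hfix) j
  have hc : ∀ i, Commute (K j) (Pr i) := fun i =>
    hKρ.of_kronecker_one hρ fun P hP hPρ => by_contra fun h => hsep P hP ⟨i, h⟩ hPρ
  have hα : ∀ i ∈ I, ∃ α : ℂ, Pr i * K j * Pr i = α • Pr i := fun i hi =>
    exists_compress_eq_smul hρ (hproj i) (hcomm i) (hTQ i hi) hKρ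
  choose! α hα using hα
  exact ⟨α, (eq_blockForm_iff (fun i => (hproj i).2) horth hsum hdisj hunion _ α).mpr ⟨hc, hα⟩⟩

lemma HasBlockFormKraus.preservesBlocksFixingTypeI (hproj : ∀ i, IsProjection (Pr i))
    (horth : ∀ i j, i ≠ j → Pr i * Pr j = 0) (hsum : ∑ i, Pr i = 1) (hdisj : Disjoint I II)
    (hunion : I ∪ II = Finset.univ) (hN : HasBlockFormKraus N Pr I II) :
    PreservesBlocksFixingTypeI N Pr I := by
  obtain ⟨m, K, hrep, htp, hform⟩ := hN
  choose α hα using hform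
  have hblock := fun j =>
    (eq_blockForm_iff (fun i => (hproj i).2) horth hsum hdisj hunion (K j) (α j)).mp (hα j)
  refine ⟨fun i => map_compress_eq_compress_of_commute (hproj i) hrep fun j => (hblock j).1 i,
    fun i hi => map_compress_of_mul_eq_smul (hproj i) hrep htp (α := (α · i)) fun j => ?_⟩
  rw [← (hblock j).2 i hi, ← ((hblock j).1 i).eq, mul_assoc, (hproj i).2]

lemma map_eq_self_of_preservesBlocks (hproj : ∀ i, IsProjection (Pr i))
    (horth : ∀ i j, i ≠ j → Pr i * Pr j = 0) (hsum : ∑ i, Pr i = 1) (hNu : N 1 = 1)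
    (h : ∀ i, ∀ X : Matrix A A ℂ, N (Pr i * X * Pr i) = Pr i * N (Pr i * X * Pr i) * Pr i)
    (i : Fin n) : N (Pr i) = Pr i := by
  have hN : ∀ k, N (Pr k) = Pr k * N (Pr k) * Pr k := fun k => by
    simpa only [mul_one, (hproj k).2] using h k 1
  calc N (Pr i) = Pr i * N (Pr i) * Pr i := hN i
    _ = ∑ k, Pr i * N (Pr k) * Pr i := by
        rw [Finset.sum_eq_single_of_mem i (Finset.mem_univ i)]
        intro k _ hk
        rw [hN k, ← mul_assoc, ← mul_assoc, horth i k (Ne.symm hk), zero_mul, zero_mul, zero_mul]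
    _ = Pr i := by
        rw [← Finset.sum_mul, ← Finset.mul_sum, ← map_sum N, hsum, hNu, mul_one, (hproj i).2]

lemma extendFst_eq_of_preservesBlocksFixingTypeI (hess : EssDecompFst ρ Pr I II)
    (hNu : N 1 = 1) (hN : PreservesBlocksFixingTypeI N Pr I) : extendFst N ρ = ρ := by
  obtain ⟨h1, h2⟩ := hN
  obtain ⟨hproj, horth, hsum, -, -, hunion, hcomm, -, hII, -⟩ := hess
  have hsum' : ∑ i, Pr i ⊗ₖ (1 : Matrix B B ℂ) = 1 := by
    rw [← one_kronecker_one, ← hsum]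
    exact (map_sum (kroneckerOneStarAlgHom A B) _ _).symm
  have hblocks := eq_sum_mul_mul_of_commute hsum'
    (fun i => by rw [← mul_kronecker_one, (hproj i).2]) hcomm
  rw [hblocks, extendFst_sum]
  refine Finset.sum_congr rfl fun i _ => ?_
  rcases Finset.mem_union.mp (hunion ▸ Finset.mem_univ i) with hi | hi
  · exact extendFst_conj_kronecker_one (h2 i hi) ρ
  · obtain ⟨_, _, -, -, -, hρi⟩ := hII i hi
    rw [hρi, extendFst_smul, extendFst_kronecker,
      map_eq_self_of_preservesBlocks hproj horth hsum hNu h1 i]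

end FixedChannels

theorem stmt_7_general {A B : Type} [Fintype A] [DecidableEq A] [Fintype B] [DecidableEq B]
    (ρ : Matrix (A × B) (A × B) ℂ) (hρ : IsDensity ρ)
    {n : ℕ} (Pr : Fin n → Matrix A A ℂ) (I II : Finset (Fin n))
    (hess : EssDecompFst ρ Pr I II)
    (N : Matrix A A ℂ →ₗ[ℂ] Matrix A A ℂ) (hN : IsCPTP N) (hNu : N 1 = 1) :
    (extendFst N ρ = ρ ↔
      ∃ (m : ℕ) (K : Fin m → Matrix A A ℂ),
        (∀ X, N X = ∑ j, K j * X * (K j)ᴴ) ∧ (∑ j, (K j)ᴴ * K j = 1) ∧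
        ∀ j, ∃ α : Fin n → ℂ,
          K j = ∑ i ∈ I, α i • Pr i + ∑ i ∈ II, Pr i * K j * Pr i)
    ∧
    (extendFst N ρ = ρ ↔
      (∀ i, ∀ X : Matrix A A ℂ,
          N (Pr i * X * Pr i) = Pr i * N (Pr i * X * Pr i) * Pr i) ∧
      (∀ i ∈ I, ∀ X : Matrix A A ℂ, N (Pr i * X * Pr i) = Pr i * X * Pr i)) := by
  obtain ⟨m, K, hrep, htp⟩ := hN
  have ⟨hproj, horth, hsum, _, hdisj, hunion, _⟩ := hess
  have hfwd : extendFst N ρ = ρ → HasBlockFormKraus N Pr I II := fun hfix =>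
    ⟨m, K, hrep, htp, blockForm_of_extendFst_eq hρ.1.1 hess hrep htp hNu hfix⟩
  have hmid : HasBlockFormKraus N Pr I II → PreservesBlocksFixingTypeI N Pr I :=
    HasBlockFormKraus.preservesBlocksFixingTypeI hproj horth hsum hdisj hunion
  have hbwd : PreservesBlocksFixingTypeI N Pr I → extendFst N ρ = ρ :=
    extendFst_eq_of_preservesBlocksFixingTypeI hess hNu
  exact ⟨⟨hfwd, hbwd ∘ hmid⟩, ⟨hmid ∘ hfwd, hbwd⟩⟩

/-- for `ρ` PC-Q with respect to its essential decomposition on `A`,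
a unital quantum channel `N` on `A` fixes `ρ` iff `N` admits a Kraus representation in
which every Kraus operator has the standard block-diagonal form; equivalently, iff `N`
preserves every subspace `A_i` and acts as the identity on operators supported on a
type I subspace. -/
theorem stmt_7 {A B : Type} [Fintype A] [DecidableEq A] [Fintype B] [DecidableEq B]
    (ρ : Matrix (A × B) (A × B) ℂ) (hρ : IsDensity ρ)
    {n : ℕ} (hn : 2 ≤ n) (Pr : Fin n → Matrix A A ℂ) (I II : Finset (Fin n))
    (hess : EssDecompFst ρ Pr I II)
    (N : Matrix A A ℂ →ₗ[ℂ] Matrix A A ℂ) (hN : IsCPTP N) (hNu : N 1 = 1) :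
    (extendFst N ρ = ρ ↔
      ∃ (m : ℕ) (K : Fin m → Matrix A A ℂ),
        (∀ X, N X = ∑ j, K j * X * (K j)ᴴ) ∧ (∑ j, (K j)ᴴ * K j = 1) ∧
        ∀ j, ∃ α : Fin n → ℂ,
          K j = ∑ i ∈ I, α i • Pr i + ∑ i ∈ II, Pr i * K j * Pr i)
    ∧
    (extendFst N ρ = ρ ↔
      (∀ i, ∀ X : Matrix A A ℂ,
          N (Pr i * X * Pr i) = Pr i * N (Pr i * X * Pr i) * Pr i) ∧
      (∀ i ∈ I, ∀ X : Matrix A A ℂ, N (Pr i * X * Pr i) = Pr i * X * Pr i)) :=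
  stmt_7_general ρ hρ Pr I II hess N hN hNu
end

section
/- Let σ_{RAB} be a tripartite density matrix and U a unitary on A⊗B such that 1_R⊗U utilizes only the semantic information of B in σ_{RAB}, i.e., the unitary 1_R⊗U on (R⊗A)⊗B is compatible with σ_{RAB} on B in the canonical case (the local unitary V on B equals the identity). Then for every linear map L on operators on A, Tr_A[(1_R⊗U)((id_R⊗L⊗id_B)(σ_{RAB}))(1_R⊗U)†] = Tr_A[(id_R⊗L⊗id_B)(σ_{RAB})]; in particular, taking L = id_A, Tr_A[(1_R⊗U)σ_{RAB}(1_R⊗U)†] = σ_{RB} where σ_{RB} = Tr_A[σ_{RAB}]. -/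
open scoped Matrix Kronecker ComplexOrder Classical

/-!
Density matrices span all matrices, so by linearity compatibility gives
`Tr_{A'}[W (M ⊗ σ) W†] = Tr(M) σ` for every `M`, where `W = (1_R ⊗ U)_{A'B} ⊗ 1_{RA}`.
For `M = |s,c₁⟩⟨s,c₂|` this reads `∑_a U_{a c₁} X U_{a c₂}† = δ_{c₁c₂} X` for every `B`-block
`X` of `σ`, with `U_{a c}` the `B`-block of `U` at `A`-indices `a, c`. The `B`-blocks of
`(id ⊗ L ⊗ id) σ` are linear combinations of those of `σ`, so after conjugating by `1_R ⊗ U`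
the trace over `A` still only sees the diagonal `A`-blocks.
-/

open scoped MatrixOrder Matrix.Norms.L2Operator

theorem Matrix.span_posSemidef_eq_top {n : Type*} [Fintype n] [DecidableEq n] :
    Submodule.span ℂ {A : Matrix n n ℂ | A.PosSemidef} = ⊤ := by
  simpa only [Matrix.nonneg_iff_posSemidef] using
    (CStarAlgebra.span_nonneg : Submodule.span ℂ {A : Matrix n n ℂ | 0 ≤ A} = ⊤)

theorem span_isDensity_eq_top {n : Type*} [Fintype n] [DecidableEq n] :
    Submodule.span ℂ {ρ : Matrix n n ℂ | IsDensity ρ} = ⊤ := by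
  refine eq_top_iff.2 (Matrix.span_posSemidef_eq_top.symm.le.trans (Submodule.span_le.2 ?_))
  intro A hA
  by_cases htr : A.trace = 0
  · simp [(hA.trace_eq_zero_iff).1 htr]
  · have hρ : IsDensity (A.trace⁻¹ • A) :=
      ⟨hA.smul (inv_nonneg.2 hA.trace_nonneg),
        by rw [Matrix.trace_smul, smul_eq_mul, inv_mul_cancel₀ htr]⟩
    have hmem := Submodule.smul_mem (Submodule.span ℂ {ρ : Matrix n n ℂ | IsDensity ρ}) A.trace
      (Submodule.subset_span hρ)
    rwa [smul_smul, mul_inv_cancel₀ htr, one_smul] at hmem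

theorem Compatible.ptraceL_eq_trace_smul {X Y : Type*} [Fintype X] [DecidableEq X] [Fintype Y]
    [DecidableEq Y] {W : Matrix (X × Y) (X × Y) ℂ} {σ : Matrix Y Y ℂ} (h : Compatible W σ)
    (M : Matrix X X ℂ) : ptraceL (W * (M ⊗ₖ σ) * Wᴴ) = M.trace • σ := by
  let conjugate : Matrix X X ℂ →ₗ[ℂ] Matrix Y Y ℂ :=
    { toFun := fun M => ptraceL (W * (M ⊗ₖ σ) * Wᴴ)
      map_add' := fun M N => by
        ext
        simp [ptraceL, Matrix.add_kronecker, Matrix.mul_add, Matrix.add_mul,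
          Finset.sum_add_distrib]
      map_smul' := fun c M => by
        ext
        simp [ptraceL, Matrix.smul_kronecker, Finset.mul_sum] }
  have hext : conjugate = (Matrix.traceLinearMap X ℂ ℂ).smulRight σ :=
    LinearMap.ext_on span_isDensity_eq_top fun ρ hρ => by
      simpa [conjugate, hρ.2] using h ρ hρ
  exact LinearMap.congr_fun hext M

theorem ptraceMid_sum {R A B ι : Type*} [Fintype A] (s : Finset ι)
    (f : ι → Matrix ((R × A) × B) ((R × A) × B) ℂ) :
    ptraceMid (∑ i ∈ s, f i) = ∑ i ∈ s, ptraceMid (f i) := by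
  ext
  simp only [ptraceMid, Matrix.of_apply, Matrix.sum_apply]
  exact Finset.sum_comm

theorem extendMid_eq_sum {R A B : Type*} [Fintype A] [DecidableEq A]
    (L : Matrix A A ℂ →ₗ[ℂ] Matrix A A ℂ) (σ : Matrix ((R × A) × B) ((R × A) × B) ℂ) :
    extendMid L σ = ∑ c₁, ∑ c₂, Matrix.of fun p q =>
      L (Matrix.single c₁ c₂ 1) p.1.2 q.1.2 * σ ((p.1.1, c₁), p.2) ((q.1.1, c₂), q.2) := by
  have hsingle : ∀ (c₁ c₂ : A) (x : ℂ), Matrix.single c₁ c₂ x = x • Matrix.single c₁ c₂ 1 := by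
    simp [Matrix.smul_single]
  ext p q
  rw [extendMid, Matrix.of_apply, Matrix.matrix_eq_sum_single (Matrix.of _)]
  simp only [Matrix.of_apply, hsingle _ _ (σ _ _), map_sum, map_smul, Matrix.sum_apply,
    Matrix.smul_apply, smul_eq_mul, mul_comm]

theorem extendMid_id {R A B : Type*} (σ : Matrix ((R × A) × B) ((R × A) × B) ℂ) :
    extendMid LinearMap.id σ = σ := by
  ext
  rfl

section OneTensor

variable {R A B : Type*} [Fintype R] [DecidableEq R] [Fintype A] [DecidableEq A] [Fintype B]
  [DecidableEq B] {U : Matrix (A × B) (A × B) ℂ} {σ : Matrix ((R × A) × B) ((R × A) × B) ℂ}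

theorem Compatible.sum_mul_mul_star_eq
    (h : Compatible (copyW (oneTensor U : Matrix ((R × A) × B) ((R × A) × B) ℂ)) σ)
    (s : R) (c₁ c₂ : A) (i j : R × A) (b b' : B) :
    ∑ a, ∑ b₁, ∑ b₂, U (a, b) (c₁, b₁) * σ (i, b₁) (j, b₂) * star (U (a, b') (c₂, b₂))
      = if c₁ = c₂ then σ (i, b) (j, b') else 0 := by
  have hentry := congr_fun (congr_fun
    (h.ptraceL_eq_trace_smul (Matrix.single (s, c₁) (s, c₂) 1)) (i, b)) (j, b')
  have htrace : (Matrix.single (s, c₁) (s, c₂) (1 : ℂ)).trace = if c₁ = c₂ then 1 else 0 := by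
    split_ifs with hc
    · exact hc ▸ Matrix.trace_single_eq_same _ _
    · exact Matrix.trace_single_eq_of_ne _ _ _ (by simpa using hc)
  simp only [ptraceL, copyW, oneTensor, ite_mul, one_mul, zero_mul, Matrix.of_apply, mul_ite,
    mul_one, mul_zero, Matrix.mul_apply, Matrix.kroneckerMap_apply, Matrix.single_apply, ite_and,
    Fintype.sum_prod_type, Finset.sum_ite_irrel, Finset.sum_const_zero, Finset.sum_ite_eq,
    Finset.mem_univ, ↓reduceIte, Matrix.conjTranspose_apply, apply_ite star, RCLike.star_def,
    star_zero, Finset.sum_mul, Prod.mk.injEq, htrace, Matrix.smul_apply, smul_eq_mul] at hentry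
  rw [← hentry]
  exact Finset.sum_congr rfl fun _ _ => Finset.sum_comm

theorem Compatible.ptraceMid_oneTensor_conj_s12
    (h : Compatible (copyW (oneTensor U : Matrix ((R × A) × B) ((R × A) × B) ℂ)) σ)
    (G : Matrix A A ℂ) (c₁ c₂ : A) :
    let Y : Matrix ((R × A) × B) ((R × A) × B) ℂ := Matrix.of fun p q =>
      G p.1.2 q.1.2 * σ ((p.1.1, c₁), p.2) ((q.1.1, c₂), q.2)
    ptraceMid (oneTensor U * Y * (oneTensor U)ᴴ) = ptraceMid Y := by
  intro Y
  ext ⟨r, b⟩ ⟨r', b'⟩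
  rw [Matrix.mul_assoc]
  calc ptraceMid (oneTensor U * (Y * (oneTensor U)ᴴ)) (r, b) (r', b')
      = ∑ a, ∑ a₁, ∑ b₁, ∑ a₂, ∑ b₂, U (a, b) (a₁, b₁) *
          (G a₁ a₂ * σ ((r, c₁), b₁) ((r', c₂), b₂) * star (U (a, b') (a₂, b₂))) := by
        simp [Y, ptraceMid, oneTensor, Matrix.mul_apply, Fintype.sum_prod_type, apply_ite star,
          mul_ite, ite_mul, Finset.mul_sum]
    _ = ∑ a₁, ∑ a₂, G a₁ a₂ *
          ∑ a, ∑ b₁, ∑ b₂, U (a, b) (a₁, b₁) * σ ((r, c₁), b₁) ((r', c₂), b₂)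
            * star (U (a, b') (a₂, b₂)) := by
        rw [Finset.sum_comm]
        refine Finset.sum_congr rfl fun a₁ _ => ?_
        rw [Finset.sum_comm_cycle]
        refine Finset.sum_congr rfl fun a₂ _ => ?_
        simp only [Finset.mul_sum]
        exact Finset.sum_congr rfl fun _ _ => Finset.sum_congr rfl fun _ _ =>
          Finset.sum_congr rfl fun _ _ => by ring
    _ = ∑ a₁, ∑ a₂, G a₁ a₂ * if a₁ = a₂ then σ ((r, c₁), b) ((r', c₂), b') else 0 := by
        simp only [h.sum_mul_mul_star_eq r]
    _ = ptraceMid Y (r, b) (r', b') := by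
        simp [Y, ptraceMid]

theorem Compatible.ptraceMid_oneTensor_conj_extendMid
    (h : Compatible (copyW (oneTensor U : Matrix ((R × A) × B) ((R × A) × B) ℂ)) σ)
    (L : Matrix A A ℂ →ₗ[ℂ] Matrix A A ℂ) :
    ptraceMid (oneTensor U * extendMid L σ * (oneTensor U)ᴴ) = ptraceMid (extendMid L σ) := by
  rw [extendMid_eq_sum]
  simp only [Matrix.mul_sum, Matrix.sum_mul, ptraceMid_sum]
  exact Finset.sum_congr rfl fun c₁ _ => Finset.sum_congr rfl fun c₂ _ =>
    h.ptraceMid_oneTensor_conj_s12 _ c₁ c₂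

end OneTensor

theorem stmt_12_general {R A B : Type} [Fintype R] [DecidableEq R] [Fintype A] [DecidableEq A]
    [Fintype B] [DecidableEq B]
    (σ : Matrix ((R × A) × B) ((R × A) × B) ℂ)
    (U : Matrix (A × B) (A × B) ℂ)
    (hcanon : ∀ ρ' : Matrix (R × A) (R × A) ℂ, IsDensity ρ' →
        ptraceL (copyW (oneTensor U) * (ρ' ⊗ₖ σ) * (copyW (oneTensor U))ᴴ) = σ) :
    (∀ L : Matrix A A ℂ →ₗ[ℂ] Matrix A A ℂ,
        ptraceMid (oneTensor U * extendMid L σ * (oneTensor U)ᴴ)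
          = ptraceMid (extendMid L σ))
    ∧ ptraceMid (oneTensor U * σ * (oneTensor U)ᴴ) = ptraceMid σ := by
  have hcompat : Compatible (copyW (oneTensor U : Matrix ((R × A) × B) ((R × A) × B) ℂ)) σ :=
    hcanon
  refine ⟨hcompat.ptraceMid_oneTensor_conj_extendMid, ?_⟩
  simpa only [extendMid_id] using hcompat.ptraceMid_oneTensor_conj_extendMid LinearMap.id

/-- if `1_R ⊗ U` utilizes only the semantic information of `B` in the
tripartite state `σ_RAB` (canonical compatibility on `B`, local unitary `V = 1`), then
for every linear map `L` on operators on `A`,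
`Tr_A[(1_R ⊗ U)((id_R ⊗ L ⊗ id_B)(σ))(1_R ⊗ U)†] = Tr_A[(id_R ⊗ L ⊗ id_B)(σ)]`;
in particular `Tr_A[(1_R ⊗ U) σ (1_R ⊗ U)†] = σ_RB`. -/
theorem stmt_12 {R A B : Type} [Fintype R] [DecidableEq R] [Fintype A] [DecidableEq A]
    [Fintype B] [DecidableEq B]
    (σ : Matrix ((R × A) × B) ((R × A) × B) ℂ) (hσ : IsDensity σ)
    (U : Matrix (A × B) (A × B) ℂ) (hU : IsUnitaryMat U)
    (hcanon : ∀ ρ' : Matrix (R × A) (R × A) ℂ, IsDensity ρ' →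
        ptraceL (copyW (oneTensor U) * (ρ' ⊗ₖ σ) * (copyW (oneTensor U))ᴴ) = σ) :
    (∀ L : Matrix A A ℂ →ₗ[ℂ] Matrix A A ℂ,
        ptraceMid (oneTensor U * extendMid L σ * (oneTensor U)ᴴ)
          = ptraceMid (extendMid L σ))
    ∧ ptraceMid (oneTensor U * σ * (oneTensor U)ᴴ) = ptraceMid σ :=
  stmt_12_general σ U hcanon
end

section
/- (No-stealth theorem, static form.) Let A, A' be systems with |A|·|A'| ≥ 2 and B, B' systems with |B'| = |B|, and let φ⁺_{BB'} be the maximally entangled state on B⊗B'. There do not exist unitaries U0 on A⊗B and U1 on A'⊗B' together with density matrices η on A⊗A' and ζ on B⊗B' such that for every density matrix ρ on A⊗A': Tr_{BB'}[(U0⊗U1)(ρ⊗φ⁺_{BB'})(U0⊗U1)†] = η and Tr_{AA'}[(U0⊗U1)(ρ⊗φ⁺_{BB'})(U0⊗U1)†] = ζ. Consequently, a quantum operation cannot be hidden in the correlation between two parties by unitary pre- and post-processing without using randomness. -/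
open scoped Matrix Kronecker ComplexOrder Classical

/-! The maps `ρ ↦ Tr_{BB'}[W (ρ ⊗ φ⁺) W†]` and `ρ ↦ Tr_{AA'}[W (ρ ⊗ φ⁺) W†]` are linear, so being
constant on density matrices forces them to be `tr ρ • η` and `tr ρ • ζ` (polarization). Since
`φ⁺` is pure, `W (|x⟩⟨y| ⊗ φ⁺) W†` is the rank-one operator `|ψ_x⟩⟨ψ_y|`. Reshape `ψ_x` into an
operator `M_x` from `BB'` to `AA'`: for basis vectors `x ≠ y` this gives `M_x M_x† = M_y M_y† = η`
and `M_x† M_y = 0`, hence `η² = M_x (M_x† M_y) M_y† = 0`, and the Hermitian `η` vanishes,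
contradicting `tr η = 1`. -/

open Matrix

lemma Matrix.polarization_vecMulVec {n : Type*} (u v : n → ℂ) :
    (4 : ℂ) • vecMulVec u (star v) =
      vecMulVec (u + v) (star (u + v)) - vecMulVec (u - v) (star (u - v)) +
        Complex.I • (vecMulVec (u + Complex.I • v) (star (u + Complex.I • v)) -
          vecMulVec (u - Complex.I • v) (star (u - Complex.I • v))) := by
  ext i j
  simp only [smul_apply, add_apply, sub_apply, vecMulVec_apply, Pi.add_apply, Pi.sub_apply,
    Pi.smul_apply, Pi.star_apply, star_add, star_sub, star_smul, smul_eq_mul,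
    Complex.star_def, Complex.conj_I]
  linear_combination ((2 : ℂ) * u i * (starRingEnd ℂ) (v j) - 2 * v i * (starRingEnd ℂ) (u j)) *
    Complex.I_sq

lemma Matrix.mul_vecMulVec_star_mul_conjTranspose {m n : Type*} [Fintype n] (W : Matrix m n ℂ)
    (u v : n → ℂ) :
    W * vecMulVec u (star v) * Wᴴ = vecMulVec (W *ᵥ u) (star (W *ᵥ v)) := by
  rw [mul_vecMulVec, vecMulVec_mul, star_mulVec]

section DensityMatrices

variable {n M : Type*} [Fintype n] [AddCommGroup M] [Module ℂ M]

lemma isDensity_inv_smul_vecMulVec {w : n → ℂ} (hw : w ≠ 0) :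
    IsDensity ((w ⬝ᵥ star w)⁻¹ • vecMulVec w (star w)) := by
  refine ⟨(posSemidef_vecMulVec_self_star w).smul (inv_nonneg.mpr (dotProduct_self_star_nonneg w)),
    ?_⟩
  rw [trace_smul, trace_vecMulVec, smul_eq_mul,
    inv_mul_cancel₀ (dotProduct_self_star_eq_zero.not.mpr hw)]

theorem LinearMap.eq_trace_smul_of_forall_isDensity (Φ : Matrix n n ℂ →ₗ[ℂ] M) {c : M}
    (h : ∀ ρ, IsDensity ρ → Φ ρ = c) (X : Matrix n n ℂ) : Φ X = X.trace • c := by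
  let Ψ := Φ - (traceLinearMap n ℂ ℂ).smulRight c
  have hΨ : ∀ X, Ψ X = Φ X - X.trace • c := fun _ => rfl
  have hpure : ∀ w : n → ℂ, Ψ (vecMulVec w (star w)) = 0 := by
    intro w
    rcases eq_or_ne w 0 with rfl | hw
    · simp
    · have hρ := h _ (isDensity_inv_smul_vecMulVec hw)
      rw [map_smul, inv_smul_eq_iff₀ (dotProduct_self_star_eq_zero.not.mpr hw)] at hρ
      rw [hΨ, hρ, trace_vecMulVec, sub_self]
  have hrankOne : ∀ u v : n → ℂ, Ψ (vecMulVec u (star v)) = 0 := by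
    intro u v
    have h4 := congrArg Ψ (polarization_vecMulVec u v)
    simp only [map_add, map_sub, map_smul, hpure, sub_self, smul_zero, add_zero] at h4
    exact (smul_eq_zero.mp h4).resolve_left four_ne_zero
  suffices Ψ X = 0 from sub_eq_zero.mp this
  induction X using Matrix.induction_on' with
  | h_zero => exact map_zero Ψ
  | h_add p q hp hq => rw [map_add, hp, hq, add_zero]
  | h_std_basis i j x =>
    have hij := hrankOne (Pi.single i 1) (Pi.single j 1)
    rw [← Pi.single_star, star_one, ← single_eq_single_vecMulVec_single] at hij
    rw [← mul_one x, ← smul_eq_mul, ← smul_single, map_smul, hij, smul_zero]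

end DensityMatrices

section PartialTrace

variable {α β : Type*}

@[simps]
def ptraceRₗ [Fintype β] : Matrix (α × β) (α × β) ℂ →ₗ[ℂ] Matrix α α ℂ where
  toFun := ptraceR
  map_add' M N := by ext; simp [ptraceR, Finset.sum_add_distrib]
  map_smul' c M := by ext; simp [ptraceR, Finset.mul_sum]

@[simps]
def ptraceLₗ [Fintype α] : Matrix (α × β) (α × β) ℂ →ₗ[ℂ] Matrix β β ℂ where
  toFun := ptraceL
  map_add' M N := by ext; simp [ptraceL, Finset.sum_add_distrib]
  map_smul' c M := by ext; simp [ptraceL, Finset.mul_sum]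

lemma ptraceR_vecMulVec [Fintype β] (u v : α × β → ℂ) :
    ptraceR (vecMulVec u (star v)) = of (Function.curry u) * (of (Function.curry v))ᴴ := by
  ext
  simp [ptraceR, vecMulVec_apply, mul_apply]

lemma ptraceL_vecMulVec [Fintype α] (u v : α × β → ℂ) :
    ptraceL (vecMulVec u (star v)) = ((of (Function.curry v))ᴴ * of (Function.curry u))ᵀ := by
  ext
  simp [ptraceL, vecMulVec_apply, mul_apply, mul_comm]

end PartialTrace

def conjKroneckerₗ {X Y : Type*} [Fintype X] [Fintype Y] (W : Matrix (X × Y) (X × Y) ℂ)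
    (σ : Matrix Y Y ℂ) : Matrix X X ℂ →ₗ[ℂ] Matrix (X × Y) (X × Y) ℂ where
  toFun ρ := W * (ρ ⊗ₖ σ) * Wᴴ
  map_add' ρ ρ' := by rw [add_kronecker, Matrix.mul_add, Matrix.add_mul]
  map_smul' c ρ := by rw [smul_kronecker, Matrix.mul_smul, Matrix.smul_mul]; rfl

lemma Matrix.vecMulVec_star_kronecker_vecMulVec_star {l n R : Type*} [CommRing R] [StarRing R]
    (s t : l → R) (x y : n → R) :
    vecMulVec s (star t) ⊗ₖ vecMulVec x (star y) =
      vecMulVec (fun p => s p.1 * x p.2) (star fun p => t p.1 * y p.2) := by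
  ext ⟨a, b⟩ ⟨a', b'⟩
  simp only [kronecker_apply, vecMulVec_apply, Pi.star_apply, star_mul']
  ring

theorem Matrix.eq_zero_of_mul_conjTranspose_eq {m n R : Type*} [Fintype m] [Fintype n]
    [PartialOrder R] [Ring R] [StarRing R] [StarOrderedRing R] [NoZeroDivisors R]
    {M N : Matrix m n R} {η : Matrix m m R} (hM : M * Mᴴ = η) (hN : N * Nᴴ = η)
    (hMN : Mᴴ * N = 0) : η = 0 := by
  have hη : ηᴴ = η := by rw [← hM, conjTranspose_mul, conjTranspose_conjTranspose]
  rw [← conjTranspose_mul_self_eq_zero, hη]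
  calc η * η = M * Mᴴ * (N * Nᴴ) := by rw [hM, hN]
    _ = M * (Mᴴ * N) * Nᴴ := by simp only [Matrix.mul_assoc]
    _ = 0 := by rw [hMN, Matrix.mul_zero, Matrix.zero_mul]

theorem eq_zero_of_forall_isDensity_marginals_eq {X Y : Type*} [Fintype X] [DecidableEq X]
    [Nontrivial X] [Fintype Y] (W : Matrix (X × Y) (X × Y) ℂ) (φ : Y → ℂ)
    {η : Matrix X X ℂ} {ζ : Matrix Y Y ℂ}
    (h : ∀ ρ, IsDensity ρ →
      ptraceR (W * (ρ ⊗ₖ vecMulVec φ (star φ)) * Wᴴ) = η ∧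
      ptraceL (W * (ρ ⊗ₖ vecMulVec φ (star φ)) * Wᴴ) = ζ) :
    η = 0 := by
  let Φ := conjKroneckerₗ W (vecMulVec φ (star φ))
  let ψ : X → X × Y → ℂ := fun x => W *ᵥ fun p => (Pi.single x 1 : X → ℂ) p.1 * φ p.2
  have hΦ : ∀ x y, Φ (vecMulVec (Pi.single x 1) (star (Pi.single y 1))) =
      vecMulVec (ψ x) (star (ψ y)) := fun x y => by
    rw [← mul_vecMulVec_star_mul_conjTranspose, ← vecMulVec_star_kronecker_vecMulVec_star]; rfl
  have hR : ∀ x y, of (Function.curry (ψ x)) * (of (Function.curry (ψ y)))ᴴ =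
      (Pi.single x (1 : ℂ) ⬝ᵥ star (Pi.single y 1)) • η := fun x y => by
    rw [← ptraceR_vecMulVec, ← hΦ, ← trace_vecMulVec]
    exact (ptraceRₗ ∘ₗ Φ).eq_trace_smul_of_forall_isDensity (fun ρ hρ => (h ρ hρ).1)
      (vecMulVec (Pi.single x 1) (star (Pi.single y 1)))
  have hL : ∀ x y, ((of (Function.curry (ψ y)))ᴴ * of (Function.curry (ψ x)))ᵀ =
      (Pi.single x (1 : ℂ) ⬝ᵥ star (Pi.single y 1)) • ζ := fun x y => by
    rw [← ptraceL_vecMulVec, ← hΦ, ← trace_vecMulVec]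
    exact (ptraceLₗ ∘ₗ Φ).eq_trace_smul_of_forall_isDensity (fun ρ hρ => (h ρ hρ).2)
      (vecMulVec (Pi.single x 1) (star (Pi.single y 1)))
  obtain ⟨x, y, hxy⟩ := exists_pair_ne X
  refine eq_zero_of_mul_conjTranspose_eq ((hR x x).trans ?_) ((hR y y).trans ?_) ?_
  · simp
  · simp
  · exact transpose_eq_zero.mp ((hL y x).trans (by simp [hxy]))

noncomputable def maxEntVec (B : Type*) [Fintype B] [DecidableEq B] : B × B → ℂ :=
  fun p => if p.1 = p.2 then ((Real.sqrt (Fintype.card B) : ℝ) : ℂ)⁻¹ else 0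

lemma maxEnt_eq_vecMulVec (B : Type*) [Fintype B] [DecidableEq B] :
    maxEnt B = vecMulVec (maxEntVec B) (star (maxEntVec B)) := by
  ext p q
  by_cases hp : p.1 = p.2 <;> by_cases hq : q.1 = q.2 <;>
    simp [maxEnt, maxEntVec, vecMulVec_apply, hp, hq]
  rw [← mul_inv, ← Complex.ofReal_mul, Real.mul_self_sqrt (Nat.cast_nonneg _)]
  simp

theorem stmt_16_general {A A' B : Type} [Fintype A] [DecidableEq A] [Fintype A'] [DecidableEq A']
    [Fintype B] [DecidableEq B]
    (hcard : 2 ≤ Fintype.card A * Fintype.card A') :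
    ¬ ∃ (U0 : Matrix (A × B) (A × B) ℂ) (U1 : Matrix (A' × B) (A' × B) ℂ)
        (η : Matrix (A × A') (A × A') ℂ) (ζ : Matrix (B × B) (B × B) ℂ),
        IsUnitaryMat U0 ∧ IsUnitaryMat U1 ∧ IsDensity η ∧ IsDensity ζ ∧
        ∀ ρ : Matrix (A × A') (A × A') ℂ, IsDensity ρ →
          ptraceR (delocW U0 U1 * (ρ ⊗ₖ maxEnt B) * (delocW U0 U1)ᴴ) = η ∧
          ptraceL (delocW U0 U1 * (ρ ⊗ₖ maxEnt B) * (delocW U0 U1)ᴴ) = ζ := by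
  rintro ⟨U0, U1, η, ζ, -, -, hη, -, h⟩
  have : Nontrivial (A × A') :=
    Fintype.one_lt_card_iff_nontrivial.mp (by rw [Fintype.card_prod]; omega)
  rw [maxEnt_eq_vecMulVec] at h
  have hη0 := eq_zero_of_forall_isDensity_marginals_eq (delocW U0 U1) _ h
  simpa [hη0] using hη.2

/-- no-stealth theorem, static form: there are no unitaries `U0`, `U1`
and fixed states `η`, `ζ` such that both marginals of
`(U0 ⊗ U1)(ρ ⊗ φ⁺_{BB'})(U0 ⊗ U1)†` are constant (equal to `η` and `ζ`) for every
density matrix `ρ` on `A ⊗ A'` with `|A|·|A'| ≥ 2`. -/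
theorem stmt_16 {A A' B : Type} [Fintype A] [DecidableEq A] [Fintype A'] [DecidableEq A']
    [Fintype B] [DecidableEq B] [Nonempty B]
    (hcard : 2 ≤ Fintype.card A * Fintype.card A') :
    ¬ ∃ (U0 : Matrix (A × B) (A × B) ℂ) (U1 : Matrix (A' × B) (A' × B) ℂ)
        (η : Matrix (A × A') (A × A') ℂ) (ζ : Matrix (B × B) (B × B) ℂ),
        IsUnitaryMat U0 ∧ IsUnitaryMat U1 ∧ IsDensity η ∧ IsDensity ζ ∧
        ∀ ρ : Matrix (A × A') (A × A') ℂ, IsDensity ρ →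
          ptraceR (delocW U0 U1 * (ρ ⊗ₖ maxEnt B) * (delocW U0 U1)ᴴ) = η ∧
          ptraceL (delocW U0 U1 * (ρ ⊗ₖ maxEnt B) * (delocW U0 U1)ᴴ) = ζ :=
  stmt_16_general hcard
end

section
/- Let N be a unital quantum channel on A and {Π_i} a finite family of mutually orthogonal projectors on A with ∑_i Π_i = 1_A (a partition of unity) such that N†(N(Π_i)) = Π_i for every i, where N† is the adjoint of N with respect to the Hilbert–Schmidt inner product. Then there exist a unitary U on A and a unital quantum channel M on A such that N = Ad_U ∘ M and M(Π_i) = Π_i for every i. -/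
open scoped Matrix Kronecker ComplexOrder Classical

/-!
Write `Q i = N (Pr i)`. Kadison–Schwarz for the unital channel `N` makes `N P - (N P)²` positive
semidefinite for a projection `P`, and the adjoint relation gives
`Tr[(N P)²] = Tr[N†(N P) P] = Tr P = Tr (N P)`; so that positive matrix has trace zero and each
`Q i` is a projection. The `Q i` again sum to `1` with the same traces as the `Pr i`, so an
isometry from the range of each `Pr i` onto the range of `Q i` assembles into a unitary `U` with
`Q i = U (Pr i) U†`, and `M = Ad_{U†} ∘ N` is the required channel.
-/

open Matrix

theorem conj_conj_of_mul_eq_one {M : Type*} [Monoid M] {v w : M} (h : w * v = 1) (x : M) :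
    w * (v * x * w) * v = x := by
  rw [← mul_assoc, ← mul_assoc, h, one_mul, mul_assoc, h, mul_one]

section Kraus

variable {X Y : Type*} [Fintype X] [Fintype Y] [DecidableEq X]
  {N : Matrix X X ℂ →ₗ[ℂ] Matrix Y Y ℂ}

theorem IsCPTP.map_conjTranspose (hN : IsCPTP N) (Z : Matrix X X ℂ) : N Zᴴ = (N Z)ᴴ := by
  obtain ⟨k, K, hK, -⟩ := hN
  simp [hK, conjTranspose_sum, Matrix.mul_assoc]

theorem IsCPTP.trace_map (hN : IsCPTP N) (Z : Matrix X X ℂ) : (N Z).trace = Z.trace := by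
  obtain ⟨k, K, hK, hKtp⟩ := hN
  calc (N Z).trace = (∑ j, (K j)ᴴ * K j * Z).trace := by
        simp only [hK, trace_sum, trace_mul_cycle (K _)]
    _ = Z.trace := by rw [← Finset.sum_mul, hKtp, one_mul]

/-- Kadison–Schwarz: the defect is `∑ j, (K j * Z - N Z * K j) * (K j * Z - N Z * K j)ᴴ`. -/
theorem IsCPTP.posSemidef_map_mul_self_sub [DecidableEq Y] (hN : IsCPTP N) (hN1 : N 1 = 1)
    {Z : Matrix X X ℂ} (hZ : Z.IsHermitian) : (N (Z * Z) - N Z * N Z).PosSemidef := by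
  have hNZ : (N Z)ᴴ = N Z := by rw [← hN.map_conjTranspose, hZ.eq]
  obtain ⟨k, K, hK, -⟩ := hN
  have hKK : ∑ j, K j * (K j)ᴴ = 1 := by simpa [hK] using hN1
  have hterm : ∀ j, (K j * Z - N Z * K j) * (K j * Z - N Z * K j)ᴴ
      = K j * (Z * Z) * (K j)ᴴ - K j * Z * (K j)ᴴ * N Z - N Z * (K j * Z * (K j)ᴴ)
        + N Z * (K j * (K j)ᴴ) * N Z := by
    intro j
    simp only [conjTranspose_sub, conjTranspose_mul, hZ.eq, hNZ, Matrix.sub_mul, Matrix.mul_sub,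
      Matrix.mul_assoc]
    abel
  have hsum : N (Z * Z) - N Z * N Z = ∑ j, (K j * Z - N Z * K j) * (K j * Z - N Z * K j)ᴴ := by
    simp only [hterm, Finset.sum_add_distrib, Finset.sum_sub_distrib, ← Finset.sum_mul,
      ← Finset.mul_sum, ← hK, hKK, mul_one]
    abel
  rw [hsum]
  exact posSemidef_sum _ fun j _ => posSemidef_self_mul_conjTranspose _

theorem IsCPTP.isProjection_map [DecidableEq Y] (hN : IsCPTP N) (hN1 : N 1 = 1)
    {P : Matrix X X ℂ} (hP : IsProjection P) (htr : (N P * N P).trace = P.trace) :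
    IsProjection (N P) := by
  refine ⟨by rw [IsHermitian, ← hN.map_conjTranspose, hP.1.eq], ?_⟩
  have hpsd := hN.posSemidef_map_mul_self_sub hN1 hP.1
  rw [hP.2] at hpsd
  have htr0 : (N P - N P * N P).trace = 0 := by rw [trace_sub, htr, hN.trace_map, sub_self]
  exact (sub_eq_zero.mp (hpsd.trace_eq_zero_iff.mp htr0)).symm

theorem IsCPTP.conj_comp [DecidableEq Y] (hN : IsCPTP N) {V : Matrix Y Y ℂ} (hV : V * Vᴴ = 1) :
    IsCPTP (LinearMap.mulLeftRight ℂ (Vᴴ, V) ∘ₗ N) := by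
  obtain ⟨k, K, hK, hKtp⟩ := hN
  refine ⟨k, fun j => Vᴴ * K j, fun Z => ?_, ?_⟩
  · simp [hK, Matrix.mul_assoc]
  · simpa [Matrix.mul_assoc, ← Matrix.mul_assoc V, hV] using hKtp

end Kraus

theorem trace_mul_conjTranspose_of_conjTranspose_mul_eq_one {A : Type*} [Fintype A] {r : ℕ}
    {V : Matrix A (Fin r) ℂ} (hV : Vᴴ * V = 1) : (V * Vᴴ).trace = r := by
  rw [trace_mul_comm, hV, trace_one, Fintype.card_fin]

section Projection

variable {A : Type*} [Fintype A] [DecidableEq A]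

theorem IsProjection.mul_eq_zero_of_sum_eq_one {ι : Type*} [Fintype ι] {Q : ι → Matrix A A ℂ}
    (hQ : ∀ i, IsProjection (Q i)) (hQ1 : ∑ i, Q i = 1) {i j : ι} (hij : i ≠ j) :
    Q i * Q j = 0 := by
  have hgram : ∀ l, (Q l * Q j)ᴴ * (Q l * Q j) = Q j * Q l * Q j := fun l => by
    rw [conjTranspose_mul, (hQ l).1.eq, (hQ j).1.eq, Matrix.mul_assoc, ← Matrix.mul_assoc (Q l),
      (hQ l).2, Matrix.mul_assoc]
  have hrest : ∑ l ∈ Finset.univ.erase j, (Q l * Q j)ᴴ * (Q l * Q j) = 0 := by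
    have h : ∑ l, Q j * Q l * Q j = Q j := by
      rw [← Finset.sum_mul, ← Finset.mul_sum, hQ1, Matrix.mul_one, (hQ j).2]
    rw [← Finset.add_sum_erase _ _ (Finset.mem_univ j), (hQ j).2, (hQ j).2] at h
    simp only [hgram]
    exact add_eq_left.mp h
  open scoped MatrixOrder in
  have hzero := (Finset.sum_eq_zero_iff_of_nonneg fun l _ =>
    (posSemidef_conjTranspose_mul_self (Q l * Q j)).nonneg).mp hrest i
    (Finset.mem_erase.mpr ⟨hij, Finset.mem_univ i⟩)
  exact conjTranspose_mul_self_eq_zero.mp hzero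

theorem exists_isometry_mul_conjTranspose_eq_diagonal {d : A → ℂ}
    (hd : ∀ a, d a = 0 ∨ d a = 1) :
    ∃ (r : ℕ) (S : Matrix A (Fin r) ℂ), Sᴴ * S = 1 ∧ S * Sᴴ = diagonal d := by
  let v : Fin _ ↪ A :=
    (Fintype.equivFin {a // d a = 1}).symm.toEmbedding.trans (Function.Embedding.subtype _)
  refine ⟨_, (1 : Matrix A A ℂ).submatrix id v, ?_, ?_⟩
  · rw [conjTranspose_submatrix, conjTranspose_one,
      ← submatrix_mul _ _ _ _ _ Function.bijective_id, Matrix.one_mul, submatrix_one_embedding]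
  · ext a b
    rw [conjTranspose_submatrix, conjTranspose_one, mul_apply]
    simp only [submatrix_apply, id, one_apply]
    have hsum : ∀ g : A → ℂ, ∑ k, g (v k) = ∑ c, if d c = 1 then g c else 0 := fun g => by
      rw [← Finset.sum_filter, Finset.sum_subtype (p := fun c => d c = 1) _ (by simp) g]
      exact Equiv.sum_comp (Fintype.equivFin {c // d c = 1}).symm (fun c => g c)
    rw [hsum (fun c => (if a = c then 1 else 0) * if c = b then 1 else 0)]
    calc _ = ∑ c, if a = c then (if d a = 1 ∧ a = b then 1 else 0) else 0 := by
          refine Finset.sum_congr rfl fun c _ => ?_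
          by_cases hac : a = c
          · subst hac
            by_cases hab : a = b <;> simp [hab]
          · simp [hac]
      _ = diagonal d a b := by
          rw [Finset.sum_ite_eq, if_pos (Finset.mem_univ a), diagonal_apply]
          by_cases hab : a = b
          · subst hab
            rcases hd a with h | h <;> simp [h]
          · simp [hab]

theorem IsProjection.exists_isometry {P : Matrix A A ℂ} (hP : IsProjection P) :
    ∃ (r : ℕ) (V : Matrix A (Fin r) ℂ), Vᴴ * V = 1 ∧ V * Vᴴ = P := by
  have hspec := hP.1.spectral_theorem
  generalize hP.1.eigenvectorUnitary = u, (RCLike.ofReal ∘ hP.1.eigenvalues : A → ℂ) = d at hspec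
  have hdd : diagonal d * diagonal d = diagonal d := by
    apply EquivLike.injective (Unitary.conjStarAlgAut ℂ (Matrix A A ℂ) u)
    exact (map_mul _ _ _).trans (by rw [← hspec, hP.2, hspec])
  have hd : ∀ a, d a = 0 ∨ d a = 1 := fun a => by
    have := congr_fun₂ hdd a a
    simp only [diagonal_mul_diagonal, diagonal_apply_eq] at this
    exact IsIdempotentElem.iff_eq_zero_or_one.mp this
  rw [Unitary.conjStarAlgAut_apply, star_eq_conjTranspose] at hspec
  obtain ⟨r, S, hS1, hS2⟩ := exists_isometry_mul_conjTranspose_eq_diagonal hd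
  refine ⟨r, (u : Matrix A A ℂ) * S, ?_, ?_⟩
  · rw [conjTranspose_mul, Matrix.mul_assoc, ← Matrix.mul_assoc (u : Matrix A A ℂ)ᴴ,
      ← star_eq_conjTranspose, Unitary.coe_star_mul_self, Matrix.one_mul, hS1]
  · rw [conjTranspose_mul, Matrix.mul_assoc, ← Matrix.mul_assoc S, hS2, hspec, Matrix.mul_assoc]

theorem IsProjection.exists_isometry_of_trace_eq {P : Matrix A A ℂ} (hP : IsProjection P) {r : ℕ}
    (hr : P.trace = r) : ∃ V : Matrix A (Fin r) ℂ, Vᴴ * V = 1 ∧ V * Vᴴ = P := by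
  obtain ⟨r', V, hV1, hV2⟩ := hP.exists_isometry
  obtain rfl : r' = r := by
    rw [← hV2, trace_mul_conjTranspose_of_conjTranspose_mul_eq_one hV1] at hr
    exact_mod_cast hr
  exact ⟨V, hV1, hV2⟩

end Projection

section UnitaryConj

variable {A : Type*} [Fintype A]

theorem conjTranspose_mul_eq_zero_of_isometry {κ κ' : Type*} [Fintype κ] [Fintype κ']
    [DecidableEq κ] [DecidableEq κ'] {V : Matrix A κ ℂ} {W : Matrix A κ' ℂ}
    (hV : Vᴴ * V = 1) (hW : Wᴴ * W = 1) (h : V * Vᴴ * (W * Wᴴ) = 0) : Vᴴ * W = 0 :=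
  calc Vᴴ * W = Vᴴ * V * Vᴴ * (W * (Wᴴ * W)) := by rw [hV, hW, Matrix.one_mul, Matrix.mul_one]
    _ = Vᴴ * (V * Vᴴ * (W * Wᴴ)) * W := by simp only [Matrix.mul_assoc]
    _ = 0 := by rw [h, Matrix.mul_zero, Matrix.zero_mul]

theorem sum_mul_conjTranspose_mul_of_isometry {B ι : Type*} [Fintype ι] {κ : ι → Type*}
    [∀ i, Fintype (κ i)] [∀ i, DecidableEq (κ i)] {V : ∀ i, Matrix A (κ i) ℂ}
    (W : ∀ i, Matrix B (κ i) ℂ) (hV : ∀ i j, i ≠ j → (V i)ᴴ * V j = 0) {k : ι}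
    (hk : (V k)ᴴ * V k = 1) : (∑ i, W i * (V i)ᴴ) * V k = W k := by
  rw [Matrix.sum_mul, Finset.sum_eq_single k]
  · rw [Matrix.mul_assoc, hk, Matrix.mul_one]
  · intro i _ hik
    rw [Matrix.mul_assoc, hV i k hik, Matrix.mul_zero]
  · simp

theorem exists_unitary_conj_of_trace_eq [DecidableEq A] {ι : Type*} [Fintype ι]
    {P Q : ι → Matrix A A ℂ}
    (hP : ∀ i, IsProjection (P i)) (hP1 : ∑ i, P i = 1)
    (hQ : ∀ i, IsProjection (Q i)) (hQ1 : ∑ i, Q i = 1) (htr : ∀ i, (P i).trace = (Q i).trace) :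
    ∃ U : Matrix A A ℂ, IsUnitaryMat U ∧ ∀ i, Q i = U * P i * Uᴴ := by
  choose r V hV1 hV2 using fun i => (hP i).exists_isometry
  choose W hW1 hW2 using fun i => (hQ i).exists_isometry_of_trace_eq
    (by rw [← htr, ← hV2 i, trace_mul_conjTranspose_of_conjTranspose_mul_eq_one (hV1 i)])
  have hVo : ∀ i j, i ≠ j → (V i)ᴴ * V j = 0 := fun i j hij =>
    conjTranspose_mul_eq_zero_of_isometry (hV1 i) (hV1 j)
      (by rw [hV2, hV2]; exact IsProjection.mul_eq_zero_of_sum_eq_one hP hP1 hij)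
  have hWo : ∀ i j, i ≠ j → (W i)ᴴ * W j = 0 := fun i j hij =>
    conjTranspose_mul_eq_zero_of_isometry (hW1 i) (hW1 j)
      (by rw [hW2, hW2]; exact IsProjection.mul_eq_zero_of_sum_eq_one hQ hQ1 hij)
  have hUt : (∑ i, W i * (V i)ᴴ)ᴴ = ∑ i, V i * (W i)ᴴ := by
    simp only [conjTranspose_sum, conjTranspose_mul, conjTranspose_conjTranspose]
  have hUV : ∀ k, (∑ i, W i * (V i)ᴴ) * V k = W k := fun k =>
    sum_mul_conjTranspose_mul_of_isometry W hVo (hV1 k)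
  have hUW : ∀ k, (∑ i, W i * (V i)ᴴ)ᴴ * W k = V k := fun k => by
    rw [hUt]; exact sum_mul_conjTranspose_mul_of_isometry V hWo (hW1 k)
  refine ⟨∑ i, W i * (V i)ᴴ, ⟨?_, ?_⟩, fun k => ?_⟩
  · conv_lhs => rw [hUt, Matrix.mul_sum]
    simp only [← Matrix.mul_assoc, hUV, hW2, hQ1]
  · conv_lhs => rw [Matrix.mul_sum]
    simp only [← Matrix.mul_assoc, hUW, hV2, hP1]
  · rw [← hV2, ← hW2, ← Matrix.mul_assoc, hUV, Matrix.mul_assoc, ← conjTranspose_mul, hUV]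

end UnitaryConj

theorem stmt_18_general {A : Type} [Fintype A] [DecidableEq A]
    (N : Matrix A A ℂ →ₗ[ℂ] Matrix A A ℂ) (hN : IsCPTP N) (hNu : N 1 = 1)
    (Nd : Matrix A A ℂ →ₗ[ℂ] Matrix A A ℂ)
    (hadj : ∀ X Y : Matrix A A ℂ, ((Nd X)ᴴ * Y).trace = (Xᴴ * N Y).trace)
    {m : ℕ} (Pr : Fin m → Matrix A A ℂ)
    (hproj : ∀ i, IsProjection (Pr i))
    (hone : ∑ i, Pr i = 1)
    (hfix : ∀ i, Nd (N (Pr i)) = Pr i) :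
    ∃ (U : Matrix A A ℂ) (M : Matrix A A ℂ →ₗ[ℂ] Matrix A A ℂ),
      IsUnitaryMat U ∧ IsCPTP M ∧ M 1 = 1 ∧
      (∀ X, N X = U * M X * Uᴴ) ∧ (∀ i, M (Pr i) = Pr i) := by
  have hsq : ∀ i, (N (Pr i) * N (Pr i)).trace = (Pr i).trace := fun i => by
    have h := hadj (N (Pr i)) (Pr i)
    rw [hfix, (hproj i).1.eq, (hproj i).2, ← hN.map_conjTranspose, (hproj i).1.eq] at h
    exact h.symm
  obtain ⟨U, hU, hconj⟩ := exists_unitary_conj_of_trace_eq hproj hone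
    (fun i => hN.isProjection_map hNu (hproj i) (hsq i)) (by rw [← map_sum, hone, hNu])
    (fun i => (hN.trace_map _).symm)
  refine ⟨U, LinearMap.mulLeftRight ℂ (Uᴴ, U) ∘ₗ N, hU, hN.conj_comp hU.1, ?_, fun X => ?_,
    fun i => ?_⟩
  · simp [LinearMap.mulLeftRight_apply, hNu, hU.2]
  · rw [LinearMap.comp_apply, LinearMap.mulLeftRight_apply, conj_conj_of_mul_eq_one hU.1]
  · rw [LinearMap.comp_apply, LinearMap.mulLeftRight_apply, hconj i, conj_conj_of_mul_eq_one hU.2]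

/-- if a unital quantum channel `N` on `A` and a partition of unity
`{Π i}` satisfy `N†(N(Π i)) = Π i` for all `i`, then `N = Ad_U ∘ M` for some unitary `U`
and some unital quantum channel `M` fixing every `Π i`. -/
theorem stmt_18 {A : Type} [Fintype A] [DecidableEq A]
    (N : Matrix A A ℂ →ₗ[ℂ] Matrix A A ℂ) (hN : IsCPTP N) (hNu : N 1 = 1)
    (Nd : Matrix A A ℂ →ₗ[ℂ] Matrix A A ℂ)
    (hadj : ∀ X Y : Matrix A A ℂ, ((Nd X)ᴴ * Y).trace = (Xᴴ * N Y).trace)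
    {m : ℕ} (Pr : Fin m → Matrix A A ℂ)
    (hproj : ∀ i, IsProjection (Pr i)) (horth : ∀ i j, i ≠ j → Pr i * Pr j = 0)
    (hone : ∑ i, Pr i = 1)
    (hfix : ∀ i, Nd (N (Pr i)) = Pr i) :
    ∃ (U : Matrix A A ℂ) (M : Matrix A A ℂ →ₗ[ℂ] Matrix A A ℂ),
      IsUnitaryMat U ∧ IsCPTP M ∧ M 1 = 1 ∧
      (∀ X, N X = U * M X * Uᴴ) ∧ (∀ i, M (Pr i) = Pr i) :=
  stmt_18_general N hN hNu Nd hadj Pr hproj hone hfix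
end
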